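/- arXiv:0710.1224 — 12 statements merged into one kernel-verified Lean document; each statement's English description precedes it below -/
import Mathlib

section
/- Let n ≥ 1. In the multivariate polynomial ring ℂ[x_1, ..., x_n], the ideal I generated by e_1, ..., e_{n−1} and e_n − 1 is a radical ideal, and the quotient ring ℂ[x_1, ..., x_n]/I is a ℂ-vector space of dimension n!. -/
/-!
Write `y_j` for the image of `x_j` in `R = K[x] ⧸ I`. The generators of `I` say exactly that
`∏ (T - y_j) = T ^ n + (-1) ^ n` in `R[T]`. Dividing by the factors `T - y_j` with `j < k` shows
that `y_k` is a root of a monic polynomial of degree `n - k` over `K[y_j : j < k]`, so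
`dim R ≤ n!`. Conversely, `T ^ n + (-1) ^ n` has `n` distinct roots `z_j`, and `I` vanishes at
the `n!` distinct points `z ∘ σ`, `σ ∈ S_n`; by the Chinese remainder theorem, evaluation at
these points maps `R` onto `K ^ n!`. Comparing dimensions, this map is an isomorphism, so `I` is
the ideal of these points, an intersection of maximal ideals.
-/

open Polynomial

section Vieta

variable {K S : Type*} [CommRing K] [CommRing S] [Algebra K S] {n : ℕ}

theorem coeff_prod_X_sub_C_eq_esymm (f : Fin n → S) {k : ℕ} (hk : k ≤ n) :
    (∏ j, (X - C (f j))).coeff (n - k) =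
      (-1) ^ k * MvPolynomial.aeval f (MvPolynomial.esymm (Fin n) K k) := by
  have hcard : Multiset.card (Finset.univ.val.map f) = n := by simp
  have hprod : ∏ j, (X - C (f j)) = ((Finset.univ.val.map f).map fun t => X - C t).prod := by
    rw [Multiset.map_map]; rfl
  rw [hprod, Multiset.prod_X_sub_C_coeff _ (by omega), hcard, Nat.sub_sub_self hk,
    MvPolynomial.aeval_esymm_eq_multiset_esymm]

theorem prod_X_sub_C_eq_X_pow_add_iff (hn : 1 ≤ n) (f : Fin n → S) :
    ∏ j, (X - C (f j)) = X ^ n + C ((-1) ^ n) ↔ ∀ k ≤ n,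
      MvPolynomial.aeval f (MvPolynomial.esymm (Fin n) K k) = if k = 0 ∨ k = n then 1 else 0 := by
  have hcoeff : ∀ k ≤ n, (X ^ n + C ((-1) ^ n : S)).coeff (n - k) =
      (-1) ^ k * if k = 0 ∨ k = n then 1 else 0 := by
    intro k hk
    rw [coeff_add, coeff_X_pow, coeff_C]
    by_cases hk0 : k = 0
    · simp [hk0, show n ≠ 0 by omega]
    by_cases hkn : k = n
    · simp [hkn, show 0 ≠ n by omega]
    · simp [hk0, hkn, show n - k ≠ n by omega, show n - k ≠ 0 by omega]
  have hdeg : (∏ j, (X - C (f j))).natDegree ≤ n :=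
    (natDegree_prod_le _ _).trans <| (Finset.sum_le_card_nsmul _ _ 1 fun j _ =>
      natDegree_X_sub_C_le (f j)).trans (by simp)
  have hdeg' : (X ^ n + C ((-1) ^ n : S)).natDegree ≤ n :=
    (natDegree_add_le _ _).trans <|
      max_le (natDegree_X_pow_le n) (by rw [natDegree_C]; exact Nat.zero_le n)
  rw [ext_iff_natDegree_le hdeg hdeg']
  refine ⟨fun h k hk => ?_, fun h i hi => ?_⟩
  · have hk' := h (n - k) (Nat.sub_le n k)
    rw [coeff_prod_X_sub_C_eq_esymm (K := K) f hk, hcoeff k hk] at hk'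
    exact (isUnit_neg_one.pow k).mul_left_cancel hk'
  · rw [← Nat.sub_sub_self hi, coeff_prod_X_sub_C_eq_esymm (K := K) f (Nat.sub_le n i),
      hcoeff _ (Nat.sub_le n i), h _ (Nat.sub_le n i)]

end Vieta

theorem Polynomial.map_divByMonic_eq_of_map_eq_mul {A R : Type*} [CommRing A] [CommRing R]
    (φ : A →+* R) {f g : A[X]} (hg : g.Monic) {h : R[X]} (hfgh : f.map φ = g.map φ * h) :
    (f /ₘ g).map φ = h := by
  rw [map_divByMonic φ hg, hfgh, mul_divByMonic_cancel_left h (hg.map φ)]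

theorem Subalgebra.rank_adjoin_singleton_le {K R : Type*} [Field K] [CommRing R] [Algebra K R]
    (A : Subalgebra K R) {x : R} {q : A[X]} (hq : q.Monic) (hx : aeval x q = 0) :
    Module.rank K ((Algebra.adjoin A {x}).restrictScalars K) ≤
      q.natDegree * Module.rank K A := by
  let v : Fin q.natDegree → R := fun i => x ^ (i : ℕ)
  have hspan : Subalgebra.toSubmodule ((Algebra.adjoin A {x}).restrictScalars K) =
      LinearMap.range ((Fintype.linearCombination A v).restrictScalars K) := by
    rw [LinearMap.range_restrictScalars, Fintype.range_linearCombination,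
      Subalgebra.restrictScalars_toSubmodule, ← Submodule.span_range_natDegree_eq_adjoin hq hx]
    congr 2
    ext
    simp [v, Fin.exists_iff]
  calc Module.rank K ((Algebra.adjoin A {x}).restrictScalars K)
      = Module.rank K (LinearMap.range ((Fintype.linearCombination A v).restrictScalars K)) := by
        rw [← hspan, Subalgebra.rank_toSubmodule]
    _ ≤ Module.rank K (Fin q.natDegree → A) := rank_range_le _
    _ = q.natDegree * Module.rank K A := by simp

section Tower

variable (K : Type*) {R : Type*} [CommRing K] [CommRing R] [Algebra K R] {n : ℕ} (y : Fin n → R)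

def adjoinPrefix (k : ℕ) : Subalgebra K R := Algebra.adjoin K (y '' {j | (j : ℕ) < k})

variable {K y}

theorem exists_monic_aeval_eq_zero_adjoinPrefix {p : K[X]}
    (hy : ∏ j, (X - C (y j)) = p.map (algebraMap K R)) (k : Fin n) :
    ∃ q : (adjoinPrefix K y k)[X], q.Monic ∧ q.natDegree ≤ n - k ∧ aeval (y k) q = 0 := by
  set A := adjoinPrefix K y k
  have hinj : Function.Injective (algebraMap A R) := Subtype.val_injective
  have hlow : (∏ j ∈ Finset.univ.filter (fun j : Fin n => (j : ℕ) < k), (X - C (y j))) ∈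
      lifts (algebraMap A R) :=
    Subsemiring.prod_mem _ fun j hj =>
      ⟨X - C ⟨y j, Algebra.subset_adjoin ⟨j, (Finset.mem_filter.mp hj).2, rfl⟩⟩, by simp⟩
  obtain ⟨g, hg_map, -, hg⟩ :=
    lifts_and_natDegree_eq_and_monic hlow (monic_prod_of_monic _ _ fun j _ => monic_X_sub_C (y j))
  set h := ∏ j ∈ Finset.univ.filter (fun j : Fin n => ¬ (j : ℕ) < k), (X - C (y j))
  have hq : ((p.map (algebraMap K A)) /ₘ g).map (algebraMap A R) = h :=
    map_divByMonic_eq_of_map_eq_mul _ hg (by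
      rw [map_map, ← IsScalarTower.algebraMap_eq, ← hy, hg_map,
        Finset.prod_filter_mul_prod_filter_not])
  refine ⟨(p.map (algebraMap K A)) /ₘ g, monic_of_injective hinj ?_, ?_, ?_⟩
  · rw [hq]
    exact monic_prod_of_monic _ _ fun j _ => monic_X_sub_C (y j)
  · rw [← natDegree_map_eq_of_injective hinj, hq]
    refine (natDegree_prod_le _ _).trans ?_
    have hcard := Finset.card_filter_add_card_filter_not
      (s := Finset.univ) (fun j : Fin n => (j : ℕ) < k)
    simp only [Fin.card_filter_val_lt, Finset.card_univ, Fintype.card_fin] at hcard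
    refine (Finset.sum_le_card_nsmul _ _ 1 fun j _ => natDegree_X_sub_C_le _).trans ?_
    simp only [smul_eq_mul, mul_one]
    omega
  · rw [aeval_def, eval₂_eq_eval_map, hq, eval_prod]
    exact Finset.prod_eq_zero (i := k) (by simp) (by simp)

end Tower

section TowerRank

variable {K R : Type*} [Field K] [CommRing R] [Algebra K R] {n : ℕ} {y : Fin n → R}

theorem rank_adjoinPrefix_le {p : K[X]} (hy : ∏ j, (X - C (y j)) = p.map (algebraMap K R)) :
    ∀ k ≤ n, Module.rank K (adjoinPrefix K y k) ≤ n.descFactorial k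
  | 0, _ => by
    have hbot : adjoinPrefix K y 0 = ⊥ := by simp [adjoinPrefix]
    rw [hbot, Nat.descFactorial_zero, Nat.cast_one, ← Subalgebra.rank_toSubmodule,
      Algebra.toSubmodule_bot, Submodule.one_eq_span]
    simpa using rank_span_le (R := K) ({1} : Set R)
  | k + 1, hk => by
    obtain ⟨q, hq, hdeg, hroot⟩ := exists_monic_aeval_eq_zero_adjoinPrefix hy ⟨k, hk⟩
    have hprefix : adjoinPrefix K y (k + 1) =
        (Algebra.adjoin (adjoinPrefix K y k) {y ⟨k, hk⟩}).restrictScalars K := by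
      rw [adjoinPrefix, adjoinPrefix, ← Algebra.adjoin_union_eq_adjoin_adjoin,
        ← Set.image_singleton, ← Set.image_union]
      congr 2
      ext j
      simp only [Order.lt_add_one_iff, Set.mem_ofPred_eq, Set.union_singleton, Set.mem_insert_iff,
        Fin.ext_iff]
      omega
    calc Module.rank K (adjoinPrefix K y (k + 1))
        ≤ q.natDegree * Module.rank K (adjoinPrefix K y k) := by
          rw [hprefix]; exact Subalgebra.rank_adjoin_singleton_le _ hq hroot
      _ ≤ (n - k : ℕ) * (n.descFactorial k : Cardinal) := by
          gcongr
          exact rank_adjoinPrefix_le hy k (by omega)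
      _ = n.descFactorial (k + 1) := by rw [Nat.descFactorial_succ, Nat.cast_mul]

theorem rank_le_factorial_of_prod_X_sub_C_eq_map {p : K[X]}
    (hgen : Algebra.adjoin K (Set.range y) = ⊤)
    (hy : ∏ j, (X - C (y j)) = p.map (algebraMap K R)) :
    Module.rank K R ≤ n.factorial := by
  have hprefix : adjoinPrefix K y n = ⊤ := by
    rw [← hgen, adjoinPrefix]
    congr
    ext
    simp
  have h := rank_adjoinPrefix_le hy n le_rfl
  rwa [hprefix, Subalgebra.rank_top, Nat.descFactorial_self] at h

end TowerRank

theorem exists_injective_prod_X_sub_C_eq {K : Type*} [Field K] [IsAlgClosed K] {p : K[X]}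
    {n : ℕ} (hp : p.Monic) (hsep : p.Separable) (hdeg : p.natDegree = n) :
    ∃ z : Fin n → K, Function.Injective z ∧ ∏ j, (X - C (z j)) = p := by
  classical
  have hroots : Multiset.card p.roots = p.natDegree :=
    splits_iff_card_roots.mp (IsAlgClosed.splits p)
  have hnodup := nodup_roots hsep
  let e : p.roots.toFinset ≃ Fin n :=
    Finset.equivFinOfCardEq (by rw [Multiset.toFinset_card_of_nodup hnodup, hroots, hdeg])
  refine ⟨fun j => e.symm j, Subtype.val_injective.comp e.symm.injective, ?_⟩
  rw [Equiv.prod_comp e.symm (fun r => X - C (r : K)),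
    Finset.prod_coe_sort p.roots.toFinset (fun r => X - C r),
    Finset.prod_eq_multiset_prod, Multiset.toFinset_val, hnodup.dedup,
    prod_multiset_X_sub_C_of_monic_of_roots_card_eq hp hroots]

theorem MvPolynomial.ker_aeval_injective {K σ : Type*} [CommRing K] :
    Function.Injective fun x : σ → K => RingHom.ker (MvPolynomial.aeval (R := K) x) := by
  intro x x' (hker : RingHom.ker (MvPolynomial.aeval x) = RingHom.ker (MvPolynomial.aeval x'))
  refine _root_.funext fun s => ?_
  have hmem : MvPolynomial.X s - MvPolynomial.C (x s) ∈ RingHom.ker (MvPolynomial.aeval x') := by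
    rw [← hker, RingHom.mem_ker]
    simp
  rw [RingHom.mem_ker] at hmem
  simpa [sub_eq_zero, eq_comm] using hmem

section Points

variable {K : Type*} [Field K]

theorem MvPolynomial.pi_aeval_surjective {σ ι : Type*} [Finite ι] {x : ι → σ → K}
    (hx : Function.Injective x) :
    Function.Surjective (AlgHom.pi fun i => MvPolynomial.aeval (R := K) (x i)) := by
  have hmax : ∀ i, (RingHom.ker (MvPolynomial.aeval (R := K) (x i))).IsMaximal := fun i =>
    RingHom.ker_isMaximal_of_surjective _ fun c => ⟨MvPolynomial.C c, MvPolynomial.aeval_C _ _⟩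
  intro c
  obtain ⟨r, hr⟩ := Ideal.exists_forall_sub_mem_ideal
    (fun i j hij => Ideal.isCoprime_iff_sup_eq.mpr <|
      (hmax i).coprime_of_ne (hmax j) fun h => hij (hx (MvPolynomial.ker_aeval_injective h)))
    (fun i => MvPolynomial.C (c i))
  refine ⟨r, _root_.funext fun i => ?_⟩
  simpa [sub_eq_zero] using RingHom.mem_ker.mp (hr i)

theorem MvPolynomial.pi_aeval_comp_perm_surjective {ι : Type*} [Finite ι] {z : ι → K}
    (hz : Function.Injective z) :
    Function.Surjective
      (AlgHom.pi fun σ : Equiv.Perm ι => MvPolynomial.aeval (R := K) (z ∘ σ)) :=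
  MvPolynomial.pi_aeval_surjective fun _ _ h => Equiv.ext fun i => hz (congrFun h i)

theorem Ideal.eq_ker_of_le_ker_of_finrank_quotient_le {S T : Type*} [CommRing S] [Algebra K S]
    [CommRing T] [Algebra K T] {F : S →ₐ[K] T} (hF : Function.Surjective F) {I : Ideal S}
    [FiniteDimensional K (S ⧸ I)] (hI : I ≤ RingHom.ker F)
    (hrank : Module.finrank K (S ⧸ I) ≤ Module.finrank K T) : I = RingHom.ker F := by
  let φ : (S ⧸ I) →ₐ[K] T := Ideal.Quotient.liftₐ I F fun a ha => hI ha
  have hφ : Function.Surjective φ := by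
    intro t
    obtain ⟨s, rfl⟩ := hF t
    exact ⟨Ideal.Quotient.mk I s, rfl⟩
  have : FiniteDimensional K T := Module.Finite.of_surjective φ.toLinearMap hφ
  have hfinrank : Module.finrank K (S ⧸ I) = Module.finrank K T :=
    le_antisymm hrank (LinearMap.finrank_le_finrank_of_surjective (f := φ.toLinearMap) hφ)
  have hφinj : Function.Injective φ :=
    (LinearMap.injective_iff_surjective_of_finrank_eq_finrank hfinrank (f := φ.toLinearMap)).mpr
      hφ
  refine le_antisymm hI fun s hs => ?_
  rw [← Ideal.Quotient.eq_zero_iff_mem]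
  refine hφinj ?_
  rw [map_zero]
  exact hs

end Points

theorem MvPolynomial.aeval_mk_X {R σ : Type*} [CommRing R] (I : Ideal (MvPolynomial σ R)) :
    MvPolynomial.aeval (fun j => Ideal.Quotient.mk I (MvPolynomial.X j)) =
      Ideal.Quotient.mkₐ R I :=
  MvPolynomial.algHom_ext fun _ => by simp

section SlnIdeal

variable (K : Type*) [CommRing K] (n : ℕ)

noncomputable def slnIdeal : Ideal (MvPolynomial (Fin n) K) :=
  Ideal.span ((fun k => MvPolynomial.esymm (Fin n) K k) '' {k | 1 ≤ k ∧ k ≤ n - 1} ∪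
    {MvPolynomial.esymm (Fin n) K n - 1})

variable {K n}

theorem slnIdeal_le_ker_aeval_iff {S : Type*} [CommRing S] [Algebra K S] (hn : 1 ≤ n)
    (f : Fin n → S) :
    slnIdeal K n ≤ RingHom.ker (MvPolynomial.aeval f) ↔
      ∏ j, (X - C (f j)) = X ^ n + C ((-1) ^ n) := by
  rw [prod_X_sub_C_eq_X_pow_add_iff (K := K) hn, slnIdeal, Ideal.span_le, Set.union_subset_iff,
    Set.image_subset_iff, Set.singleton_subset_iff]
  simp only [Set.subset_def, Set.mem_preimage, Set.mem_ofPred_eq, SetLike.mem_coe,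
    RingHom.mem_ker, map_sub, map_one, sub_eq_zero, and_imp]
  refine ⟨fun ⟨hmid, htop⟩ k hk => ?_, fun h => ⟨fun k hk1 hk2 => ?_, ?_⟩⟩
  · by_cases hk0 : k = 0
    · simp [hk0]
    by_cases hkn : k = n
    · simp [hkn, htop]
    · simp [hk0, hkn, hmid k (by omega) (by omega)]
  · simpa [show k ≠ 0 by omega, show k ≠ n by omega] using h k (by omega)
  · simpa using h n le_rfl

theorem prod_X_sub_C_mk_X_eq (hn : 1 ≤ n) :
    ∏ j, (X - C (Ideal.Quotient.mk (slnIdeal K n) (MvPolynomial.X j))) =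
      X ^ n + C ((-1) ^ n) := by
  refine (slnIdeal_le_ker_aeval_iff (K := K) hn _).mp fun f hf => ?_
  rw [RingHom.mem_ker, MvPolynomial.aeval_mk_X, Ideal.Quotient.mkₐ_eq_mk,
    Ideal.Quotient.eq_zero_iff_mem]
  exact hf

theorem rank_quotient_slnIdeal_le {K : Type*} [Field K] (hn : 1 ≤ n) :
    Module.rank K (MvPolynomial (Fin n) K ⧸ slnIdeal K n) ≤ n.factorial := by
  refine rank_le_factorial_of_prod_X_sub_C_eq_map (p := X ^ n + C ((-1) ^ n))
    (y := fun j => Ideal.Quotient.mk (slnIdeal K n) (MvPolynomial.X j)) ?_ ?_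
  · rw [Algebra.adjoin_range_eq_range_aeval, MvPolynomial.aeval_mk_X, AlgHom.range_eq_top]
    exact Ideal.Quotient.mkₐ_surjective K _
  · simpa using prod_X_sub_C_mk_X_eq (K := K) hn

theorem exists_slnIdeal_eq_ker_pi_aeval {K : Type*} [Field K] [IsAlgClosed K]
    (hn : (n : K) ≠ 0) :
    ∃ z : Fin n → K, Function.Injective z ∧ slnIdeal K n =
      RingHom.ker
        (AlgHom.pi fun σ : Equiv.Perm (Fin n) => MvPolynomial.aeval (R := K) (z ∘ σ)) := by
  have hn1 : 1 ≤ n := Nat.one_le_iff_ne_zero.mpr (by rintro rfl; simp at hn)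
  obtain ⟨z, hz, hzp⟩ := exists_injective_prod_X_sub_C_eq (K := K) (p := X ^ n + C ((-1) ^ n))
    (monic_X_pow_add_C _ (by omega))
    (by simpa [sub_eq_add_neg] using separable_X_pow_sub_C (-(-1) ^ n : K) hn (by simp))
    natDegree_X_pow_add_C
  have hrank := rank_quotient_slnIdeal_le (K := K) hn1
  have : FiniteDimensional K (MvPolynomial (Fin n) K ⧸ slnIdeal K n) :=
    Module.rank_lt_aleph0_iff.mp (hrank.trans_lt Cardinal.natCast_lt_aleph0)
  refine ⟨z, hz, Ideal.eq_ker_of_le_ker_of_finrank_quotient_le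
    (MvPolynomial.pi_aeval_comp_perm_surjective hz) ?_ ?_⟩
  · intro f hf
    rw [RingHom.mem_ker]
    ext σ
    have hσ : slnIdeal K n ≤ RingHom.ker (MvPolynomial.aeval (z ∘ σ)) := by
      rw [slnIdeal_le_ker_aeval_iff hn1, ← hzp]
      exact Equiv.prod_comp σ fun j => X - C (z j)
    exact hσ hf
  · rw [Module.finrank_fintype_fun_eq_card, Fintype.card_perm, Fintype.card_fin]
    exact Module.finrank_le_of_rank_le hrank

theorem slnIdeal_isRadical {K : Type*} [Field K] [IsAlgClosed K] (hn : (n : K) ≠ 0) :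
    (slnIdeal K n).IsRadical := by
  obtain ⟨z, hz, hker⟩ := exists_slnIdeal_eq_ker_pi_aeval hn
  rw [hker, RingHom.ker_isRadical_iff_reduced_of_surjective
    (MvPolynomial.pi_aeval_comp_perm_surjective hz)]
  infer_instance

theorem finrank_quotient_slnIdeal {K : Type*} [Field K] [IsAlgClosed K] (hn : (n : K) ≠ 0) :
    Module.finrank K (MvPolynomial (Fin n) K ⧸ slnIdeal K n) = n.factorial := by
  obtain ⟨z, hz, hker⟩ := exists_slnIdeal_eq_ker_pi_aeval hn
  rw [hker, (Ideal.quotientKerAlgEquivOfSurjective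
      (MvPolynomial.pi_aeval_comp_perm_surjective hz)).toLinearEquiv.finrank_eq,
    Module.finrank_fintype_fun_eq_card, Fintype.card_perm, Fintype.card_fin]

end SlnIdeal

open MvPolynomial

/-- in `ℂ[x_1, …, x_n]`, the ideal generated by `e_1, …, e_{n-1}` and
`e_n − 1` is radical, and the quotient is an `n!`-dimensional complex vector space. -/
theorem sln_scheme_reduced (n : ℕ) (hn : 1 ≤ n)
    (I : Ideal (MvPolynomial (Fin n) ℂ))
    (hI : I = Ideal.span
      ((fun k => esymm (Fin n) ℂ k) '' {k | 1 ≤ k ∧ k ≤ n - 1} ∪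
        {esymm (Fin n) ℂ n - 1})) :
    I.IsRadical ∧ Module.finrank ℂ (MvPolynomial (Fin n) ℂ ⧸ I) = Nat.factorial n := by
  have hn' : (n : ℂ) ≠ 0 := Nat.cast_ne_zero.mpr (by omega)
  subst hI
  exact ⟨slnIdeal_isRadical hn', finrank_quotient_slnIdeal hn'⟩
end

section
/- Let n ≥ 1 and let ζ_1, ..., ζ_n ∈ ℂ be pairwise distinct with ζ_i^n = (−1)^{n−1} for every i. Then for all integers 0 ≤ k ≤ d ≤ n, e_k(conj(ζ_1), ..., conj(ζ_d)) = (ζ_{d+1}·ζ_{d+2}···ζ_n) · e_{d−k}(ζ_1, ..., ζ_d), where conj denotes complex conjugation. -/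
noncomputable def esymmVal (n k : ℕ) (x : Fin n → ℂ) : ℂ :=
  ∑ t ∈ Finset.powersetCard k Finset.univ, ∏ i ∈ t, x i

/-!
The `ζ i` are `n` distinct roots of `X ^ n - (-1) ^ (n - 1)`, hence all of its roots, so by Vieta
their product is `1`. They lie on the unit circle, so `conj (ζ i) = (ζ i)⁻¹`. For nonzero `x`,
complementation of subsets gives `(∏ x) · e_k(x⁻¹) = e_{d-k}(x)`, and
`(∏_{i < d} ζ i)⁻¹ = ∏_{i ≥ d} ζ i` because the full product is `1`.
-/

open Finset Polynomial

theorem neg_one_pow_card_mul_prod_eq_neg_of_pow_card_eq {K ι : Type*} [Field K] [Fintype ι]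
    [Nonempty ι] {x : ι → K} (hx : Function.Injective x) {c : K}
    (hroot : ∀ i, x i ^ Fintype.card ι = c) :
    (-1) ^ Fintype.card ι * ∏ i, x i = -c := by
  set n := Fintype.card ι
  have hn : n ≠ 0 := Fintype.card_ne_zero
  set p : K[X] := X ^ n - C c
  have hmonic : p.Monic := monic_X_pow_sub_C c hn
  have hdeg : p.natDegree = n := natDegree_X_pow_sub_C
  have hroots : univ.val.map x = p.roots := by
    refine Multiset.eq_of_le_of_card_le ?_ ?_
    · rw [Multiset.le_iff_subset (univ.nodup.map hx)]
      intro a ha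
      obtain ⟨i, -, rfl⟩ := Multiset.mem_map.1 ha
      simp [mem_roots hmonic.ne_zero, p, hroot i]
    · simpa [hdeg] using card_roots' p
  have hsplits : p.Splits := by
    rw [splits_iff_card_roots, ← hroots, hdeg]; simp [n]
  have hcoeff : p.coeff 0 = -c := by simp [p, hn.symm]
  rw [← hcoeff, hsplits.coeff_zero_eq_prod_roots_of_monic hmonic, hdeg, ← hroots]
  rfl

theorem prod_mul_sum_powersetCard_prod_inv {K ι : Type*} [Semifield K] [Fintype ι]
    {x : ι → K} (hx : ∀ i, x i ≠ 0) {k : ℕ} (hk : k ≤ Fintype.card ι) :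
    (∏ i, x i) * ∑ t ∈ powersetCard k univ, ∏ i ∈ t, (x i)⁻¹ =
      ∑ t ∈ powersetCard (Fintype.card ι - k) univ, ∏ i ∈ t, x i := by
  classical
  rw [mul_sum]
  refine sum_nbij' (fun t => tᶜ) (fun s => sᶜ) ?_ ?_ (fun t _ => compl_compl t)
    (fun s _ => compl_compl s) ?_
  · intro t ht
    simp_all [card_compl]
  · intro s hs
    rw [mem_powersetCard_univ] at hs ⊢
    rw [card_compl, hs]
    omega
  · intro t _
    have ht : ∏ i ∈ t, x i ≠ 0 := prod_ne_zero_iff.2 fun i _ => hx i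
    rw [← prod_compl_mul_prod t, prod_inv_distrib, mul_assoc, mul_inv_cancel₀ ht, mul_one]

theorem Fin.prod_castLE_mul_prod_filter_le {M : Type*} [CommMonoid M] {d n : ℕ} (h : d ≤ n)
    (f : Fin n → M) :
    (∏ i : Fin d, f (i.castLE h)) * ∏ i ∈ univ.filter (fun i : Fin n => d ≤ (i : ℕ)), f i =
      ∏ i, f i := by
  rw [← prod_filter_not_mul_prod_filter univ (fun i : Fin n => d ≤ (i : ℕ))]
  congr 1
  refine (prod_map univ (Fin.castLEEmb h) f).symm.trans (congrArg (Finset.prod · f) ?_)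
  ext i
  simp only [mem_map, mem_univ, true_and, mem_filter, not_le, coe_castLEEmb]
  exact ⟨fun ⟨a, ha⟩ => ha ▸ a.isLt, fun hi => ⟨⟨i, hi⟩, rfl⟩⟩

/-- if `ζ_1, …, ζ_n` are pairwise distinct `n`-th roots of `(-1)^(n-1)`,
then for `0 ≤ k ≤ d ≤ n`,
`e_k(conj ζ_1, …, conj ζ_d) = (ζ_{d+1} ⋯ ζ_n) · e_{d-k}(ζ_1, …, ζ_d)`. -/
theorem conj_esymm_grassmannian (n : ℕ) (hn : 1 ≤ n) (ζ : Fin n → ℂ)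
    (hinj : Function.Injective ζ) (hroot : ∀ i, ζ i ^ n = (-1 : ℂ) ^ (n - 1))
    (k d : ℕ) (hkd : k ≤ d) (hdn : d ≤ n) :
    esymmVal d k (fun i => starRingEnd ℂ (ζ (Fin.castLE hdn i))) =
      (∏ i ∈ Finset.univ.filter (fun i : Fin n => d ≤ (i : ℕ)), ζ i) *
        esymmVal d (d - k) (fun i => ζ (Fin.castLE hdn i)) := by
  have hnorm (i : Fin n) : ‖ζ i‖ = 1 :=
    Complex.norm_eq_one_of_pow_eq_one (n := 2 * n)
      (by rw [pow_mul', hroot i, ← pow_mul, pow_mul', neg_one_sq, one_pow]) (by omega)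
  have hprod : ∏ i, ζ i = 1 := by
    have : Nonempty (Fin n) := ⟨⟨0, hn⟩⟩
    have hvieta := neg_one_pow_card_mul_prod_eq_neg_of_pow_card_eq hinj
      (by simpa only [Fintype.card_fin] using hroot)
    have hsign : (-1 : ℂ) ^ n = -(-1) ^ (n - 1) := by
      rw [← pow_sub_one_mul (by omega : n ≠ 0), mul_neg_one]
    rw [Fintype.card_fin, ← hsign] at hvieta
    exact mul_left_cancel₀ (pow_ne_zero n (neg_ne_zero.2 one_ne_zero))
      (hvieta.trans (mul_one _).symm)
  set x : Fin d → ℂ := fun i => ζ (Fin.castLE hdn i)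
  have hx (i : Fin d) : x i ≠ 0 := norm_ne_zero_iff.1 (by simp [x, hnorm])
  calc esymmVal d k (fun i => starRingEnd ℂ (x i))
      = esymmVal d k (fun i => (x i)⁻¹) := by simp only [← Complex.inv_eq_conj (hnorm _), x]
    _ = (∏ i ∈ univ.filter (fun i : Fin n => d ≤ (i : ℕ)), ζ i) * (∏ i, x i) *
          esymmVal d k (fun i => (x i)⁻¹) := by
      rw [mul_comm _ (∏ i, x i), Fin.prod_castLE_mul_prod_filter_le, hprod, one_mul]
    _ = _ := by
      rw [mul_assoc, esymmVal, esymmVal,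
        prod_mul_sum_powersetCard_prod_inv hx (by simpa using hkd), Fintype.card_fin]
end

section
/- Let n ≥ 1 and let x = (x_0, x_1, ..., x_n) ∈ ℂ^{n+1}. Then x satisfies e_k(x_0², x_1², ..., x_n²) = 0 for all 1 ≤ k ≤ n−1, e_n(x_0², ..., x_n²) = 4, and x_0·x_1···x_n = 0, if and only if exactly one coordinate x_i is zero and the squares x_j² of the remaining n coordinates are pairwise distinct and satisfy (x_j²)^n = (−1)^{n−1}·4. -/
open Polynomial Finset

/-! If `x i₀ = 0`, the squares of the other `n` coordinates form a multiset `M` with the same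
elementary symmetric functions `E_k`, `k ≥ 1`, as all `n + 1` squares. By Vieta, the conditions on
the `E_k` say exactly that `∏_{a ∈ M} (X - a) = X ^ n - c` with `c = (-1) ^ (n - 1) * 4`. As
`X ^ n - c` is separable for `c ≠ 0`, this holds iff `M` consists of `n` distinct `n`-th roots of
`c`; these are nonzero, so `x i₀` is the only vanishing coordinate. -/

namespace Multiset

theorem esymm_cons_succ {R : Type*} [CommSemiring R] (a : R) (s : Multiset R) (k : ℕ) :
    (a ::ₘ s).esymm (k + 1) = s.esymm (k + 1) + a * s.esymm k := by
  simp only [esymm, powersetCard_cons, map_add, sum_add, map_map, Function.comp_def, prod_cons,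
    sum_map_mul_left]

theorem esymm_zero_cons {R : Type*} [CommSemiring R] (s : Multiset R) {k : ℕ} (hk : k ≠ 0) :
    (0 ::ₘ s).esymm k = s.esymm k := by
  obtain ⟨k, rfl⟩ := Nat.exists_eq_succ_of_ne_zero hk
  rw [esymm_cons_succ, zero_mul, add_zero]

theorem prod_X_sub_C_eq_X_pow_sub_C_iff_esymm {R : Type*} [CommRing R] {s : Multiset R} {n : ℕ}
    (hs : card s = n) (hn : n ≠ 0) (c : R) :
    (s.map fun a => X - C a).prod = X ^ n - C c ↔
      (∀ k, 0 < k → k < n → s.esymm k = 0) ∧ (-1) ^ (n - 1) * s.esymm n = c := by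
  nontriviality R
  have hcoeff : ∀ k ≤ n, (s.map fun a => X - C a).prod.coeff (n - k) = (-1) ^ k * s.esymm k :=
    fun k hk => by
      rw [prod_X_sub_C_coeff s (by omega), hs, Nat.sub_sub_self hk]
  have hdeg : (s.map fun a => X - C a).prod.natDegree = n := by
    rw [natDegree_multiset_prod_X_sub_C_eq_card, hs]
  have hneg : ∀ e : R, (-1) ^ n * e = -((-1) ^ (n - 1) * e) := fun e => by
    obtain ⟨m, rfl⟩ := Nat.exists_eq_succ_of_ne_zero hn
    simp [pow_succ]
  constructor
  · intro h
    refine ⟨fun k hk0 hkn => ?_, ?_⟩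
    · have := hcoeff k hkn.le
      rw [h, coeff_sub, coeff_X_pow, coeff_C, if_neg (by omega), if_neg (by omega),
        sub_zero] at this
      simpa using this.symm
    · have := hcoeff n le_rfl
      rw [h, Nat.sub_self, coeff_sub, coeff_X_pow, coeff_C, if_neg (by omega), if_pos rfl,
        zero_sub, hneg] at this
      exact (neg_inj.mp this).symm
  · rintro ⟨hzero, hlast⟩
    ext m
    rcases lt_or_ge n m with hm | hm
    · rw [coeff_eq_zero_of_natDegree_lt (by omega), coeff_sub, coeff_X_pow, coeff_C,
        if_neg (by omega), if_neg (by omega), sub_zero]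
    obtain ⟨k, hk, rfl⟩ : ∃ k ≤ n, m = n - k := ⟨n - m, by omega, by omega⟩
    rw [hcoeff k hk, coeff_sub, coeff_X_pow, coeff_C]
    rcases Nat.eq_zero_or_pos k with rfl | hk0
    · simp [esymm, hn]
    rcases hk.lt_or_eq with hkn | rfl
    · rw [hzero k hk0 hkn, if_neg (by omega), if_neg (by omega), mul_zero, sub_zero]
    · rw [hneg, hlast, Nat.sub_self]
      simp [hn.symm]

theorem prod_X_sub_C_eq_X_pow_sub_C_iff {K : Type*} [Field K] {s : Multiset K} {n : ℕ}
    (hs : card s = n) (hn : (n : K) ≠ 0) {c : K} (hc : c ≠ 0) :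
    (s.map fun a => X - C a).prod = X ^ n - C c ↔ s.Nodup ∧ ∀ a ∈ s, a ^ n = c := by
  have hn0 : 0 < n := Nat.pos_of_ne_zero (by rintro rfl; exact hn Nat.cast_zero)
  have hmonic : (X ^ n - C c).Monic := monic_X_pow_sub_C c hn0.ne'
  constructor
  · intro h
    have hroots : nthRoots n c = s := by rw [nthRoots, ← h, roots_multiset_prod_X_sub_C]
    refine ⟨hroots ▸ nodup_roots (separable_X_pow_sub_C c hn hc), fun a ha => ?_⟩
    rwa [← mem_nthRoots hn0, hroots]
  · rintro ⟨hnodup, hpow⟩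
    have hsub : s ≤ nthRoots n c :=
      (le_iff_subset hnodup).2 fun a ha => (mem_nthRoots hn0).2 (hpow a ha)
    have hroots : s = (X ^ n - C c).roots :=
      eq_of_le_of_card_le hsub (hs ▸ card_nthRoots n c)
    rw [hroots]
    refine prod_multiset_X_sub_C_of_monic_of_roots_card_eq hmonic ?_
    rw [← hroots, hs, natDegree_X_pow_sub_C]

end Multiset

theorem esymmVal_eq_esymm_erase {m k : ℕ} {y : Fin m → ℂ} {i₀ : Fin m} (h₀ : y i₀ = 0)
    (hk : k ≠ 0) : esymmVal m k y = ((univ.erase i₀).val.map y).esymm k := by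
  have huniv : (univ : Finset (Fin m)).val = i₀ ::ₘ (univ.erase i₀).val :=
    (Multiset.cons_erase (mem_univ i₀)).symm
  rw [esymmVal, ← esymm_map_val, huniv, Multiset.map_cons, h₀, Multiset.esymm_zero_cons _ hk]

theorem sq_map_erase_nodup_and_pow_iff {ι M₀ : Type*} [Fintype ι] [DecidableEq ι]
    [MonoidWithZero M₀] [NoZeroDivisors M₀] {x : ι → M₀} {i₀ : ι} (h₀ : x i₀ = 0) {n : ℕ}
    (hn : n ≠ 0) {c : M₀} (hc : c ≠ 0) :
    (((univ.erase i₀).val.map fun i => x i ^ 2).Nodup ∧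
        ∀ a ∈ (univ.erase i₀).val.map fun i => x i ^ 2, a ^ n = c) ↔
      ((∃! i, x i = 0) ∧ (∀ j l, x j ≠ 0 → x l ≠ 0 → j ≠ l → x j ^ 2 ≠ x l ^ 2) ∧
        ∀ j, x j ≠ 0 → (x j ^ 2) ^ n = c) := by
  rw [Multiset.nodup_map_iff_inj_on (univ.erase i₀).nodup, Multiset.forall_mem_map_iff]
  simp only [mem_val, mem_erase, mem_univ, and_true]
  have hzero : ∀ j, x j ≠ 0 → j ≠ i₀ := fun j hj h => hj (h ▸ h₀)
  constructor
  · rintro ⟨hinj, hpow⟩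
    have hne : ∀ j ≠ i₀, x j ≠ 0 := fun j hj h => hc (by simpa [h, hn] using (hpow j hj).symm)
    exact ⟨⟨i₀, h₀, fun j hj => not_not.1 fun h => hne j h hj⟩,
      fun j l hj hl hjl heq => hjl (hinj j (hzero j hj) l (hzero l hl) heq),
      fun j hj => hpow j (hzero j hj)⟩
  · rintro ⟨⟨_, _, huniq⟩, hdist, hpow⟩
    have hne : ∀ j ≠ i₀, x j ≠ 0 := fun j hj h => hj ((huniq j h).trans (huniq i₀ h₀).symm)
    exact ⟨fun j hj l hl heq => not_not.1 fun hjl => hdist j l (hne j hj) (hne l hl) hjl heq,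
      fun j hj => hpow j (hne j hj)⟩

/-- description of the zero locus `Z(so_{2n+2})`: a tuple
`x ∈ ℂ^{n+1}` satisfies `E_k(x) = 0` for `1 ≤ k ≤ n-1`, `E_n(x) = 4` and
`x_0 ⋯ x_n = 0` iff exactly one coordinate vanishes and the squares of the
remaining `n` coordinates are pairwise distinct `n`-th roots of `(-1)^(n-1)·4`. -/
theorem zero_locus_so (n : ℕ) (hn : 1 ≤ n) (x : Fin (n + 1) → ℂ) :
    ((∀ k, 1 ≤ k → k ≤ n - 1 → esymmVal (n + 1) k (fun i => x i ^ 2) = 0) ∧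
        esymmVal (n + 1) n (fun i => x i ^ 2) = 4 ∧ (∏ i, x i) = 0) ↔
      ((∃! i, x i = 0) ∧
        (∀ j l, x j ≠ 0 → x l ≠ 0 → j ≠ l → x j ^ 2 ≠ x l ^ 2) ∧
        (∀ j, x j ≠ 0 → (x j ^ 2) ^ n = (-1 : ℂ) ^ (n - 1) * 4)) := by
  obtain ⟨i₀, h₀⟩ | hx := em (∃ i, x i = 0)
  swap
  · exact iff_of_false (fun h => hx ((prod_eq_zero_iff.1 h.2.2).imp fun _ => And.right))
      fun h => hx h.1.exists
  set M := (univ.erase i₀).val.map fun i => x i ^ 2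
  have hM : Multiset.card M = n := by simp [M]
  have hc : (-1 : ℂ) ^ (n - 1) * 4 ≠ 0 := by simp
  have hE : ∀ k ≠ 0, esymmVal (n + 1) k (fun i => x i ^ 2) = M.esymm k :=
    fun k hk => esymmVal_eq_esymm_erase (by simp [h₀]) hk
  rw [← sq_map_erase_nodup_and_pow_iff h₀ (by omega) hc,
    ← M.prod_X_sub_C_eq_X_pow_sub_C_iff hM (Nat.cast_ne_zero.2 (by omega)) hc,
    M.prod_X_sub_C_eq_X_pow_sub_C_iff_esymm hM (by omega), mul_right_inj' (by simp),
    prod_eq_zero (mem_univ i₀) h₀, hE n (by omega)]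
  refine and_congr (forall_congr' fun k => ⟨fun h hk hkn => ?_, fun h hk hkn => ?_⟩)
    (and_iff_left rfl)
  · rw [← hE k hk.ne']
    exact h hk (by omega)
  · rw [hE k (by omega)]
    exact h hk (by omega)
end

section
/- Let n ≥ 1 and let x = (x_0, ..., x_n) ∈ ℂ^{n+1} be such that exactly one coordinate x_i is zero and the squares x_j² of the remaining coordinates are pairwise distinct and satisfy (x_j²)^n = (−1)^{n−1}·4. If σ is a permutation of {0, 1, ..., n} and ε_0, ..., ε_n ∈ {1, −1} satisfy ε_0·ε_1···ε_n = 1 and ε_i·x_{σ(i)} = x_i for all i, then σ is the identity permutation and ε_i = 1 for all i. -/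
/-!
Squaring is injective on the coordinates: two distinct nonzero coordinates have distinct squares
by hypothesis, and a nonzero coordinate cannot share its square with the unique zero one. Since
`(ε i)² = 1`, the relation `ε i · x (σ i) = x i` gives `x (σ i)² = x i²`, so `σ` is the identity.
Then `ε i = 1` wherever `x i ≠ 0`, and the remaining sign is `1` because the product is `1`.
-/

lemma injective_sq_of_subsingleton_zero {ι M₀ : Type*} [MonoidWithZero M₀] [NoZeroDivisors M₀]
    {x : ι → M₀} (hzero : {i | x i = 0}.Subsingleton)
    (hdist : ∀ j l, x j ≠ 0 → x l ≠ 0 → j ≠ l → x j ^ 2 ≠ x l ^ 2) :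
    Function.Injective fun i ↦ x i ^ 2 := by
  intro j l hjl
  by_contra hne
  by_cases hj : x j = 0
  · have hl : x l = 0 := pow_eq_zero_iff two_ne_zero |>.mp (by simpa [hj] using hjl.symm)
    exact hne (hzero hj hl)
  · have hl : x l ≠ 0 := fun hl ↦ hj (pow_eq_zero_iff two_ne_zero |>.mp (by simpa [hl] using hjl))
    exact hdist j l hj hl hne hjl

lemma Equiv.Perm.eq_one_of_mul_apply_eq {ι M : Type*} [CommMonoid M] {x : ι → M}
    (hx : Function.Injective fun i ↦ x i ^ 2) {σ : Equiv.Perm ι} {ε : ι → M}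
    (hε : ∀ i, ε i ^ 2 = 1) (hfix : ∀ i, ε i * x (σ i) = x i) : σ = 1 :=
  Equiv.ext fun i ↦ hx <| by
    simp only [← hfix i, mul_pow, hε, one_mul, Equiv.Perm.one_apply]

theorem so_orbit_free_general (n : ℕ) (x : Fin (n + 1) → ℂ)
    (hzero : ∃! i, x i = 0)
    (hdist : ∀ j l, x j ≠ 0 → x l ≠ 0 → j ≠ l → x j ^ 2 ≠ x l ^ 2)
    (σ : Equiv.Perm (Fin (n + 1))) (ε : Fin (n + 1) → ℂ)
    (hsign : ∀ i, ε i = 1 ∨ ε i = -1) (hprod : (∏ i, ε i) = 1)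
    (hfix : ∀ i, ε i * x (σ i) = x i) :
    σ = 1 ∧ ∀ i, ε i = 1 := by
  have hε2 : ∀ i, ε i ^ 2 = 1 := fun i ↦ by rcases hsign i with h | h <;> simp [h]
  have hσ : σ = 1 := Equiv.Perm.eq_one_of_mul_apply_eq
    (injective_sq_of_subsingleton_zero (fun _ hj _ hl ↦ hzero.unique hj hl) hdist) hε2 hfix
  obtain ⟨i₀, -, huniq⟩ := hzero
  have hε : ∀ i ≠ i₀, ε i = 1 := fun i hi ↦ by
    have h := hfix i
    rw [hσ, Equiv.Perm.one_apply] at h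
    exact (mul_eq_right₀ fun h0 ↦ hi (huniq i h0)).mp h
  refine ⟨hσ, fun i ↦ ?_⟩
  rcases eq_or_ne i i₀ with rfl | hi
  · rwa [Fintype.prod_eq_single i hε] at hprod
  · exact hε i hi

/-- freeness of the `W(D_{n+1})`-action on `Z(so_{2n+2})`: if exactly one
coordinate of `x ∈ ℂ^{n+1}` vanishes and the squares of the remaining coordinates are
pairwise distinct `n`-th roots of `(-1)^{n-1}·4`, then the only pair `(σ, ε)` of a
permutation and signs of product `1` with `ε_i · x_{σ(i)} = x_i` for all `i` is the
trivial one. -/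
theorem so_orbit_free (n : ℕ) (hn : 1 ≤ n) (x : Fin (n + 1) → ℂ)
    (hzero : ∃! i, x i = 0)
    (hdist : ∀ j l, x j ≠ 0 → x l ≠ 0 → j ≠ l → x j ^ 2 ≠ x l ^ 2)
    (hroot : ∀ j, x j ≠ 0 → (x j ^ 2) ^ n = (-1 : ℂ) ^ (n - 1) * 4)
    (σ : Equiv.Perm (Fin (n + 1))) (ε : Fin (n + 1) → ℂ)
    (hsign : ∀ i, ε i = 1 ∨ ε i = -1) (hprod : (∏ i, ε i) = 1)
    (hfix : ∀ i, ε i * x (σ i) = x i) :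
    σ = 1 ∧ ∀ i, ε i = 1 :=
  so_orbit_free_general n x hzero hdist σ ε hsign hprod hfix
end

section
/- Let n ≥ 1 and let ζ_1, ..., ζ_n ∈ ℂ be such that the squares ζ_1², ..., ζ_n² are pairwise distinct and satisfy (ζ_i²)^n = (−1)^{n−1}·4 for every i. Then e_n(ζ_1, ..., ζ_n)² = 4, and for every integer 0 ≤ k ≤ n, e_k(conj(ζ_1), ..., conj(ζ_n)) = 2^{(2k/n) − 2} · e_n(ζ_1, ..., ζ_n) · e_{n−k}(ζ_1, ..., ζ_n), where conj denotes complex conjugation and 2^{(2k/n) − 2} is the positive real power of 2 with real exponent 2k/n − 2. -/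
open Finset Polynomial

theorem Polynomial.prod_eq_neg_one_pow_mul_of_injective_of_pow_eq {R : Type*} [CommRing R]
    [IsDomain R] {n : ℕ} (hn : n ≠ 0) {x : Fin n → R} (hx : Function.Injective x) {c : R}
    (hroot : ∀ i, x i ^ n = c) :
    ∏ i, x i = (-1) ^ (n + 1) * c := by
  set m : Multiset R := univ.val.map x
  have hm_le : m ≤ nthRoots n c := by
    rw [Multiset.le_iff_subset (univ.nodup.map hx)]
    intro a ha
    obtain ⟨i, -, rfl⟩ := Multiset.mem_map.mp ha
    exact (mem_nthRoots (Nat.pos_of_ne_zero hn)).mpr (hroot i)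
  have hm_card : Multiset.card (nthRoots n c) ≤ Multiset.card m := by
    simpa [m] using card_nthRoots n c
  have hroots : (X ^ n - C c).roots = m := (Multiset.eq_of_le_of_card_le hm_le hm_card).symm
  have hsplits : (X ^ n - C c).Splits := by
    rw [splits_iff_card_roots, hroots, natDegree_X_pow_sub_C]
    simp [m]
  have hvieta := hsplits.coeff_zero_eq_prod_roots_of_monic (monic_X_pow_sub_C c hn)
  rw [hroots, natDegree_X_pow_sub_C] at hvieta
  have hcoeff : (X ^ n - C c).coeff 0 = -c := by simp [coeff_X_pow, Ne.symm hn]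
  have hsq : ((-1 : R) ^ n) ^ 2 = 1 := by rw [← pow_mul, mul_comm, pow_mul, neg_one_sq, one_pow]
  have hprod : m.prod = ∏ i, x i := rfl
  rw [hcoeff, hprod] at hvieta
  linear_combination (-(-1) ^ n) * hvieta - (∏ i, x i) * hsq

theorem esymmVal_self {n : ℕ} (x : Fin n → ℂ) : esymmVal n n x = ∏ i, x i := by
  have h := powersetCard_self (univ : Finset (Fin n))
  rw [card_univ, Fintype.card_fin] at h
  rw [esymmVal, h, sum_singleton]

theorem esymmVal_mul_inv_mul_prod {n k : ℕ} (hk : k ≤ n) (c : ℂ) {x : Fin n → ℂ}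
    (hx : ∀ i, x i ≠ 0) :
    esymmVal n k (fun i => c * (x i)⁻¹) * ∏ i, x i = c ^ k * esymmVal n (n - k) x := by
  rw [esymmVal, esymmVal, sum_mul, mul_sum]
  refine sum_nbij' (fun t => tᶜ) (fun s => sᶜ) ?_ ?_ (fun t _ => compl_compl t)
    (fun s _ => compl_compl s) ?_
  · intro t ht
    rw [mem_powersetCard_univ] at ht ⊢
    rw [card_compl, Fintype.card_fin, ht]
  · intro s hs
    rw [mem_powersetCard_univ] at hs ⊢
    rw [card_compl, Fintype.card_fin, hs]
    omega
  · intro t ht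
    rw [mem_powersetCard_univ] at ht
    have ht_ne : ∏ i ∈ t, x i ≠ 0 := prod_ne_zero_iff.mpr fun i _ => hx i
    rw [prod_mul_distrib, prod_const, ht, prod_inv_distrib, ← prod_mul_prod_compl t x]
    field_simp

theorem Complex.conj_eq_normSq_mul_inv (z : ℂ) : (starRingEnd ℂ) z = normSq z * z⁻¹ := by
  rcases eq_or_ne z 0 with rfl | hz
  · simp
  · rw [← mul_conj, mul_comm z, mul_assoc, mul_inv_cancel₀ hz, mul_one]

theorem Complex.normSq_eq_two_rpow_of_norm_sq_pow {z : ℂ} {n : ℕ} (hn : n ≠ 0)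
    (h : ‖(z ^ 2) ^ n‖ = 4) : normSq z = 2 ^ (2 / n : ℝ) := by
  have hpow : (2 ^ (2 / n : ℝ) : ℝ) ^ n = 4 := by
    rw [← Real.rpow_natCast, ← Real.rpow_mul zero_le_two,
      div_mul_cancel₀ _ (by exact_mod_cast hn), Real.rpow_two]
    norm_num
  refine (pow_left_inj₀ (normSq_nonneg z) (by positivity) hn).mp ?_
  rw [hpow, ← h, norm_pow, norm_pow, ← normSq_eq_norm_sq]

theorem two_rpow_two_div_pow_div_four (n k : ℕ) :
    ((2 : ℝ) ^ (2 / n : ℝ)) ^ k / 4 = (2 : ℝ) ^ (2 * (k : ℝ) / n - 2) := by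
  rw [← Real.rpow_natCast, ← Real.rpow_mul zero_le_two, Real.rpow_sub two_pos, Real.rpow_two,
    div_mul_eq_mul_div]
  norm_num

/-- if the squares `ζ_1², …, ζ_n²` are pairwise distinct `n`-th roots of
`(-1)^{n-1}·4`, then `e_n(ζ)² = 4` and for `0 ≤ k ≤ n`,
`e_k(conj ζ) = 2^{2k/n − 2} · e_n(ζ) · e_{n−k}(ζ)`. -/
theorem conj_esymm_orthogonal (n : ℕ) (hn : 1 ≤ n) (ζ : Fin n → ℂ)
    (hdist : ∀ i j, i ≠ j → ζ i ^ 2 ≠ ζ j ^ 2)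
    (hroot : ∀ i, (ζ i ^ 2) ^ n = (-1 : ℂ) ^ (n - 1) * 4) :
    esymmVal n n ζ ^ 2 = 4 ∧
      ∀ k : ℕ, k ≤ n →
        esymmVal n k (fun i => starRingEnd ℂ (ζ i)) =
          (((2 : ℝ) ^ (2 * (k : ℝ) / (n : ℝ) - 2) : ℝ) : ℂ) *
            esymmVal n n ζ * esymmVal n (n - k) ζ := by
  have hn0 : n ≠ 0 := by omega
  have hprod_sq : ∏ i, ζ i ^ 2 = 4 := by
    rw [prod_eq_neg_one_pow_mul_of_injective_of_pow_eq hn0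
      (fun i j h => not_imp_not.mp (hdist i j) h) hroot, ← mul_assoc, ← pow_add,
      show n + 1 + (n - 1) = 2 * n by omega, pow_mul, neg_one_sq, one_pow, one_mul]
  have hEn : esymmVal n n ζ ^ 2 = 4 := by rw [esymmVal_self, ← prod_pow, hprod_sq]
  refine ⟨hEn, fun k hk => ?_⟩
  have hζ0 : ∀ i, ζ i ≠ 0 := by
    have hne : ∏ i, ζ i ^ 2 ≠ 0 := by rw [hprod_sq]; norm_num
    exact fun i => (pow_ne_zero_iff two_ne_zero).mp (prod_ne_zero_iff.mp hne i (mem_univ i))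
  set r : ℝ := 2 ^ (2 / n : ℝ)
  have hconj : (fun i => starRingEnd ℂ (ζ i)) = fun i => (r : ℂ) * (ζ i)⁻¹ := by
    funext i
    rw [Complex.conj_eq_normSq_mul_inv,
      Complex.normSq_eq_two_rpow_of_norm_sq_pow hn0 (by simp [hroot])]
  have key := esymmVal_mul_inv_mul_prod hk (r : ℂ) hζ0
  rw [← esymmVal_self, ← hconj] at key
  rw [← two_rpow_two_div_pow_div_four]
  push_cast
  linear_combination (esymmVal n n ζ / 4) * key -
    (esymmVal n k (fun i => starRingEnd ℂ (ζ i)) / 4) * hEn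
end

section
/- Let n ≥ 1 and let R = {z ∈ ℂ : z^{n+1} = (−1)^n} be the set of (n+1)-th roots of (−1)^n (a set of n+1 elements). Then the set of functions f : R → ℂ such that f(r)² = r for every r ∈ R and ∏_{r ∈ R} f(r) = 1 has exactly 2^n elements. -/
/-!
The `n + 1` roots of `X ^ (n + 1) - (-1) ^ n` have product `1`, as the constant coefficient shows.
Fix one root `r₀`. At every other root `r` the value `f r` is one of the two square roots of `r`,
chosen freely, and `∏ f = 1` then forces `f r₀ = (∏_{r ≠ r₀} f r)⁻¹`; this value is automatically
a square root of `r₀`, because `r₀ * ∏_{r ≠ r₀} r = 1`. Hence there are `2 ^ n` such `f`.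
-/

open Polynomial Finset

namespace IsPrimitiveRoot

variable {R : Type*} [CommRing R] [IsDomain R] {k : ℕ} {ζ a : R}

theorem card_nthRootsFinset_of_exists (hζ : IsPrimitiveRoot ζ k) (ha : a ≠ 0)
    (h : ∃ α, α ^ k = a) : #(nthRootsFinset k a) = k := by
  classical
  rw [nthRootsFinset_def, Multiset.toFinset_card_of_nodup (hζ.nthRoots_nodup ha),
    hζ.card_nthRoots, if_pos h]

theorem prod_nthRootsFinset (hζ : IsPrimitiveRoot ζ k) (hk : 0 < k) (ha : a ≠ 0)
    (h : ∃ α, α ^ k = a) : ∏ x ∈ nthRootsFinset k a, x = (-1) ^ (k + 1) * a := by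
  classical
  have hdeg : (X ^ k - C a).natDegree = k := natDegree_X_pow_sub_C
  have hsplits : (X ^ k - C a).Splits := by
    rw [splits_iff_card_roots, hdeg]
    simpa [nthRoots] using hζ.card_nthRoots a ▸ if_pos h
  have hcoeff := hsplits.coeff_zero_eq_prod_roots_of_monic (monic_X_pow_sub_C a hk.ne')
  rw [hdeg, coeff_sub, coeff_X_pow, if_neg hk.ne, coeff_C_zero, zero_sub] at hcoeff
  rw [nthRootsFinset_def, prod_eq_multiset_prod, Multiset.toFinset_val,
    (hζ.nthRoots_nodup ha).dedup, Multiset.map_id', nthRoots]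
  have hsign : ((-1 : R) ^ k) ^ 2 = 1 := by rw [← pow_mul, pow_mul', neg_one_sq, one_pow]
  linear_combination -(-1) ^ k * hcoeff - (X ^ k - C a).roots.prod * hsign

end IsPrimitiveRoot

section SquareRoots

variable {K : Type*} [Field K]

theorem Nat.card_sq_eq (h2 : (2 : K) ≠ 0) {a : K} (ha : a ≠ 0) (hsq : IsSquare a) :
    Nat.card {x : K // x ^ 2 = a} = 2 := by
  obtain ⟨b, rfl⟩ := hsq
  have hb : b ≠ 0 := by rintro rfl; simp at ha
  have hpair : {x : K | x ^ 2 = b * b} = {b, -b} := by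
    ext x
    simp [← sq, sq_eq_sq_iff_eq_or_eq_neg]
  have hne : b ≠ -b := by
    intro h
    have h2b : 2 * b = 0 := by linear_combination h
    exact hb ((_root_.mul_eq_zero.mp h2b).resolve_left h2)
  change Nat.card {x : K | x ^ 2 = b * b} = 2
  rw [Nat.card_coe_set_eq, hpair, Set.ncard_pair hne]

variable {ι : Type*} [Fintype ι] {r : ι → K}

theorem Nat.card_sqrt_selections (h2 : (2 : K) ≠ 0) (hr : ∀ i, r i ≠ 0)
    (hsq : ∀ i, IsSquare (r i)) :
    Nat.card {f : ι → K // ∀ i, f i ^ 2 = r i} = 2 ^ Fintype.card ι := by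
  rw [Nat.card_congr (Equiv.subtypePiEquivPi : _ ≃ ∀ i, {x : K // x ^ 2 = r i}), Nat.card_pi]
  simp [Nat.card_sq_eq h2 (hr _) (hsq _)]

variable [DecidableEq ι]

theorem mul_prod_sq_eq_one (hprod : ∏ i, r i = 1) (i₀ : ι) {g : {i // i ≠ i₀} → K}
    (hg : ∀ i, g i ^ 2 = r i) : r i₀ * (∏ i, g i) ^ 2 = 1 := by
  rw [← prod_pow, Fintype.prod_congr _ _ hg, ← Fintype.prod_eq_mul_prod_subtype_ne, hprod]

def sqrtSelectionsProdEqOneEquiv (hprod : ∏ i, r i = 1) (i₀ : ι) :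
    {f : ι → K // (∀ i, f i ^ 2 = r i) ∧ ∏ i, f i = 1} ≃
      {g : {i // i ≠ i₀} → K // ∀ i, g i ^ 2 = r i} where
  toFun f := ⟨fun i ↦ f.1 i, fun i ↦ f.2.1 i⟩
  invFun g := ⟨fun i ↦ if h : i = i₀ then (∏ j, g.1 j)⁻¹ else g.1 ⟨i, h⟩, by
    have hmul := mul_prod_sq_eq_one hprod i₀ g.2
    have hne : ∏ j, g.1 j ≠ 0 := fun h ↦ by simp [h] at hmul
    refine ⟨fun i ↦ ?_, ?_⟩
    · by_cases h : i = i₀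
      · subst h; simpa [inv_pow] using inv_eq_of_mul_eq_one_left hmul
      · simpa [h] using g.2 ⟨i, h⟩
    · rw [Fintype.prod_eq_mul_prod_subtype_ne _ i₀]
      simp [hne, fun j : {i // i ≠ i₀} ↦ j.2]⟩
  left_inv f := by
    ext i
    by_cases h : i = i₀
    · subst h
      have := f.2.2
      rw [Fintype.prod_eq_mul_prod_subtype_ne _ i] at this
      simpa using (eq_inv_of_mul_eq_one_left this).symm
    · simp [h]
  right_inv g := by
    ext i
    simp [i.2]

theorem Nat.card_sqrt_selections_prod_eq_one [Nonempty ι] (h2 : (2 : K) ≠ 0)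
    (hsq : ∀ i, IsSquare (r i)) (hprod : ∏ i, r i = 1) :
    Nat.card {f : ι → K // (∀ i, f i ^ 2 = r i) ∧ ∏ i, f i = 1} = 2 ^ (Fintype.card ι - 1) := by
  obtain ⟨i₀⟩ := ‹Nonempty ι›
  have hr : ∀ i, r i ≠ 0 := fun i ↦
    Finset.prod_ne_zero_iff.mp (hprod ▸ one_ne_zero) i (Finset.mem_univ i)
  rw [Nat.card_congr (sqrtSelectionsProdEqOneEquiv hprod i₀),
    Nat.card_sqrt_selections (r := fun i : {i // i ≠ i₀} ↦ r i) h2 (fun i ↦ hr i) (fun i ↦ hsq i)]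
  simp [Fintype.card_subtype_compl]

end SquareRoots

theorem lagrangian_spectrum_card_general (n : ℕ) :
    Set.ncard {z : ℂ | z ^ (n + 1) = (-1 : ℂ) ^ n} = n + 1 ∧
    Set.ncard {f : {z : ℂ // z ^ (n + 1) = (-1 : ℂ) ^ n} → ℂ |
        (∀ r, f r ^ 2 = (r : ℂ)) ∧ (∏ᶠ r, f r) = 1} = 2 ^ n := by
  classical
  have hζ := Complex.isPrimitiveRoot_exp (n + 1) n.succ_ne_zero
  have ha : (-1 : ℂ) ^ n ≠ 0 := by simp
  have hroot := IsAlgClosed.exists_pow_nat_eq ((-1 : ℂ) ^ n) n.succ_pos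
  have hmem (z : ℂ) := mem_nthRootsFinset n.succ_pos ((-1 : ℂ) ^ n) (x := z)
  have hcard := hζ.card_nthRootsFinset_of_exists ha hroot
  let _ : Fintype {z : ℂ // z ^ (n + 1) = (-1 : ℂ) ^ n} := Fintype.ofFinset _ hmem
  have hprod : ∏ r : {z : ℂ // z ^ (n + 1) = (-1 : ℂ) ^ n}, (r : ℂ) = 1 := by
    rw [← Finset.prod_subtype _ hmem (fun z ↦ z), hζ.prod_nthRootsFinset n.succ_pos ha hroot,
      ← pow_add, (by ring : n + 1 + 1 + n = 2 * (n + 1)), pow_mul, neg_one_sq, one_pow]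
  constructor
  · rw [show {z : ℂ | z ^ (n + 1) = (-1 : ℂ) ^ n} = ↑(nthRootsFinset (n + 1) ((-1 : ℂ) ^ n)) by
      ext z; simp, Set.ncard_coe_finset, hcard]
  · have _ : Nonempty {z : ℂ // z ^ (n + 1) = (-1 : ℂ) ^ n} := ⟨⟨_, hroot.choose_spec⟩⟩
    simp_rw [finprod_eq_prod_of_fintype]
    rw [← Nat.card_coe_set_eq]
    refine (Nat.card_sqrt_selections_prod_eq_one two_ne_zero
      (fun r ↦ IsAlgClosed.exists_eq_mul_self _) hprod).trans ?_
    rw [Fintype.card_of_subtype _ hmem, hcard, Nat.add_sub_cancel]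

/-- let `R` be the set of `(n+1)`-th roots of `(-1)^n` (a set with `n+1`
elements). The set of functions `f : R → ℂ` with `f(r)² = r` for all `r ∈ R` and
`∏_{r ∈ R} f(r) = 1` has exactly `2^n` elements. -/
theorem lagrangian_spectrum_card (n : ℕ) (hn : 1 ≤ n) :
    Set.ncard {z : ℂ | z ^ (n + 1) = (-1 : ℂ) ^ n} = n + 1 ∧
    Set.ncard {f : {z : ℂ // z ^ (n + 1) = (-1 : ℂ) ^ n} → ℂ |
        (∀ r, f r ^ 2 = (r : ℂ)) ∧ (∏ᶠ r, f r) = 1} = 2 ^ n :=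
  lagrangian_spectrum_card_general n
end

section
/- For every z ∈ ℂ with z^{25} − 270·z^{13} − 27·z = 0, one has 234 · 12^{1/4} · z · conj(z) = z^{12} · (11·z^{12} − 2967), where conj denotes complex conjugation and 12^{1/4} is the positive real fourth root of 12. -/
/-!
For `z ≠ 0` the number `a = z ^ 12` is a root of `X ^ 2 - 270 X - 27`, hence real, and
`|z| ^ 24 = a ^ 2`. On that quadratic the right-hand side reduces to `3 (a + 99)`, so it suffices to
show `12 ^ (1/4) |z| ^ 2 = (a + 99) / 78`. Both sides are nonnegative, and their twelfth powers
agree: `((a + 99) / 78) ^ 12 = 1728 a ^ 2` holds modulo the quadratic.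
-/

theorem Complex.im_eq_zero_of_sq_add_mul_add_eq_zero {b c : ℝ} (hbc : 4 * c ≤ b ^ 2) {w : ℂ}
    (hw : w ^ 2 + b * w + c = 0) : w.im = 0 := by
  have hre := congrArg Complex.re hw
  have him := congrArg Complex.im hw
  simp only [sq, Complex.add_re, Complex.add_im, Complex.mul_re, Complex.mul_im, Complex.ofReal_re,
    Complex.ofReal_im, Complex.zero_re, Complex.zero_im] at hre him
  have key : w.im ^ 2 * (4 * w.im ^ 2 + (b ^ 2 - 4 * c)) = 0 := by
    linear_combination (-4 * w.im ^ 2) * hre + (w.im * (2 * w.re + b)) * him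
  have h_disc : 0 ≤ w.im ^ 2 * (b ^ 2 - 4 * c) := mul_nonneg (sq_nonneg _) (sub_nonneg.2 hbc)
  exact (pow_eq_zero_iff (n := 4) (by norm_num)).1 (by nlinarith)

theorem twelve_rpow_one_div_four_pow_twelve : ((12 : ℝ) ^ ((1 : ℝ) / 4)) ^ 12 = 1728 := by
  rw [show 12 = 4 * 3 by rfl, pow_mul, one_div, show (4 : ℝ) = (4 : ℕ) by norm_num,
    Real.rpow_inv_natCast_pow (by norm_num) (by norm_num)]
  norm_num

theorem pow_twelve_eq_of_sq_eq {a : ℝ} (ha : a ^ 2 = 270 * a + 27) :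
    ((a + 99) / 78) ^ 12 = 1728 * a ^ 2 := by
  generalize hv : (a + 99) / 78 = v
  obtain rfl : a = 78 * v - 99 := by rw [← hv]; ring
  have hv2 : v ^ 2 = 6 * v - 6 := by linear_combination ha / 6084
  have hv4 : v ^ 4 = 36 * (4 * v - 5) := by linear_combination (v ^ 2 + 6 * v + 30) * hv2
  have hv12 : v ^ 12 = 46656 * (780 * v - 989) := by
    rw [show v ^ 12 = (v ^ 4) ^ 3 by ring, hv4]
    linear_combination 46656 * (64 * v + 144) * hv2
  linear_combination hv12 - 10513152 * hv2

theorem twelve_rpow_one_div_four_mul_eq {a N : ℝ} (ha : a ^ 2 = 270 * a + 27) (hN : 0 ≤ N)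
    (hNa : N ^ 12 = a ^ 2) : (12 : ℝ) ^ ((1 : ℝ) / 4) * N = (a + 99) / 78 := by
  have h_lower : 0 ≤ 270 * a + 27 := ha ▸ sq_nonneg a
  refine (pow_left_inj₀ (by positivity) (by linarith) (by norm_num : 12 ≠ 0)).1 ?_
  rw [mul_pow, twelve_rpow_one_div_four_pow_twelve, hNa, pow_twelve_eq_of_sq_eq ha]

/-- for every root `z` of `P(z) = z^25 − 270 z^13 − 27 z`, one has
`234 · 12^{1/4} · z · conj(z) = z^12 · (11 z^12 − 2967)`. -/
theorem cayley_plane_conjugation (z : ℂ)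
    (hz : z ^ 25 - 270 * z ^ 13 - 27 * z = 0) :
    234 * (((12 : ℝ) ^ ((1 : ℝ) / 4) : ℝ) : ℂ) * z * starRingEnd ℂ z =
      z ^ 12 * (11 * z ^ 12 - 2967) := by
  rcases eq_or_ne z 0 with rfl | hz0
  · simp
  have hw : (z ^ 12) ^ 2 + ((-270 : ℝ) : ℂ) * z ^ 12 + ((-27 : ℝ) : ℂ) = 0 :=
    mul_left_cancel₀ hz0 (by push_cast; linear_combination hz)
  set a := (z ^ 12).re
  have hza : z ^ 12 = a :=
    Complex.ext rfl (Complex.im_eq_zero_of_sq_add_mul_add_eq_zero (by norm_num) hw)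
  have haC : (a : ℂ) ^ 2 = 270 * a + 27 := by
    rw [hza] at hw
    push_cast at hw
    linear_combination hw
  have ha : a ^ 2 = 270 * a + 27 := by exact_mod_cast haC
  have hNa : Complex.normSq z ^ 12 = a ^ 2 := by
    rw [← map_pow, hza, Complex.normSq_ofReal, sq]
  have hkey := twelve_rpow_one_div_four_mul_eq ha (Complex.normSq_nonneg z) hNa
  rw [mul_assoc, Complex.mul_conj, mul_assoc, ← Complex.ofReal_mul, hkey, hza]
  push_cast
  linear_combination -11 * haC
end

section
/- In the polynomial ring ℚ[T], let P(T) = 64 − 401808·T + 29496·T² − T³ and Q(T) = 4237743313/721278 − (33629825/77976)·T + (84371/5770224)·T². Then P divides (T·Q(T))^{18} − 3456²·T², i.e. (T·Q(T))^{18} ≡ (3456·T)² modulo P. -/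
/-!
Work in `ℚ[T]/(P)`, where every class is `a + bT + cT²` and `T³ = 64 − 401808T + 29496T²`.
Multiplication in this basis is an explicit formula in the coefficients, so the class of
`(T·Q(T))^18` is obtained by eighteen multiplications of rational triples, and it comes out as
`3456²·T²`.
-/

open Polynomial

section Cubic

variable {k A : Type*} [CommRing k] [CommRing A] [Algebra k A]

def quadAt (r : A) (a b c : k) : A :=
  algebraMap k A a + algebraMap k A b * r + algebraMap k A c * r ^ 2

variable {r : A} {p₀ p₁ p₂ : k}

theorem mul_quadAt (hr : r ^ 3 = quadAt r p₀ p₁ p₂) (a b c : k) :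
    r * quadAt r a b c = quadAt r (p₀ * c) (a + p₁ * c) (b + p₂ * c) := by
  simp only [quadAt, map_add, map_mul] at hr ⊢
  linear_combination algebraMap k A c * hr

theorem quadAt_mul_quadAt (hr : r ^ 3 = quadAt r p₀ p₁ p₂) (a b c a' b' c' : k) :
    quadAt r a b c * quadAt r a' b' c' =
      quadAt r (a * a' + (b * c' + c * b' + c * c' * p₂) * p₀)
        (a * b' + b * a' + (b * c' + c * b' + c * c' * p₂) * p₁ + c * c' * p₀)
        (a * c' + b * b' + c * a' + (b * c' + c * b' + c * c' * p₂) * p₂ + c * c' * p₁) := by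
  simp only [quadAt, map_add, map_mul] at hr ⊢
  linear_combination (algebraMap k A b * algebraMap k A c' + algebraMap k A c * algebraMap k A b' +
    algebraMap k A c * algebraMap k A c' * (algebraMap k A p₂ + r)) * hr

theorem AdjoinRoot.root_pow_three_eq_quadAt (p₀ p₁ p₂ : k) :
    root (C p₀ + C p₁ * X + C p₂ * X ^ 2 - X ^ 3) ^ 3 = quadAt (root _) p₀ p₁ p₂ := by
  have hroot := eval₂_root (C p₀ + C p₁ * X + C p₂ * X ^ 2 - X ^ 3)
  simp only [eval₂_sub, eval₂_add, eval₂_mul, eval₂_C, eval₂_X, eval₂_X_pow] at hroot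
  simp only [quadAt, algebraMap_eq]
  linear_combination -hroot

end Cubic

theorem freudenthal_pow_eighteen {A : Type*} [CommRing A] [Algebra ℚ A] {r : A}
    (hr : r ^ 3 = quadAt r (64 : ℚ) (-401808) 29496) :
    (r * quadAt r (4237743313 / 721278 : ℚ) (-(33629825 / 77976)) (84371 / 5770224)) ^ 18 =
      quadAt r (0 : ℚ) 0 (3456 ^ 2) := by
  rw [mul_quadAt hr]
  norm_num [pow_succ, quadAt_mul_quadAt hr]

/-- with `P(T) = 64 − 401808 T + 29496 T² − T³` and
`Q(T) = 4237743313/721278 − (33629825/77976) T + (84371/5770224) T²` in `ℚ[T]`,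
one has `(T·Q(T))^18 ≡ (3456 T)² mod P`. -/
theorem freudenthal_key_fact
    (P Q : Polynomial ℚ)
    (hP : P = C 64 - C 401808 * X + C 29496 * X ^ 2 - X ^ 3)
    (hQ : Q = C (4237743313 / 721278) - C (33629825 / 77976) * X +
      C (84371 / 5770224) * X ^ 2) :
    P ∣ (X * Q) ^ 18 - (C 3456 * X) ^ 2 := by
  obtain rfl : P = C 64 + C (-401808) * X + C 29496 * X ^ 2 - X ^ 3 := by rw [hP, C_neg]; ring
  rw [← AdjoinRoot.mk_eq_mk]
  convert freudenthal_pow_eighteen (AdjoinRoot.root_pow_three_eq_quadAt _ _ _) using 1 <;>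
    simp only [hQ, quadAt, map_sub, map_add, map_mul, map_pow, map_neg, map_zero,
      AdjoinRoot.mk_C, AdjoinRoot.mk_X, AdjoinRoot.algebraMap_eq] <;>
    ring
end

section
/- The cubic polynomial T³ − 29496·T² + 401808·T − 64 has three pairwise distinct complex roots, all of which are real and positive. -/
/-!
The cubic changes sign on `[0, 1]`, `[1, 20]` and `[20, 30000]`, so the intermediate value
theorem gives a positive real root in each of these intervals. Three distinct roots of a monic
cubic over a domain determine its factorisation, so they are all of its complex roots.
-/

open Set

section CubicRoots

variable {R : Type*} [CommRing R] [IsDomain R] {p q r a b c : R}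

/-- Dividing differences of the root equations by differences of the roots yields Vieta's
formulas. -/
theorem cubic_eq_prod_sub_of_roots (hab : a ≠ b) (hac : a ≠ c) (hbc : b ≠ c)
    (ha : a ^ 3 - p * a ^ 2 + q * a - r = 0) (hb : b ^ 3 - p * b ^ 2 + q * b - r = 0)
    (hc : c ^ 3 - p * c ^ 2 + q * c - r = 0) (z : R) :
    z ^ 3 - p * z ^ 2 + q * z - r = (z - a) * (z - b) * (z - c) := by
  have hqab : a ^ 2 + a * b + b ^ 2 - p * (a + b) + q = 0 := by
    refine (mul_eq_zero.1 ?_).resolve_left (sub_ne_zero.2 hab)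
    linear_combination ha - hb
  have hqac : a ^ 2 + a * c + c ^ 2 - p * (a + c) + q = 0 := by
    refine (mul_eq_zero.1 ?_).resolve_left (sub_ne_zero.2 hac)
    linear_combination ha - hc
  have hsum : a + b + c - p = 0 := by
    refine (mul_eq_zero.1 ?_).resolve_left (sub_ne_zero.2 hbc)
    linear_combination hqab - hqac
  linear_combination (z ^ 2 - a ^ 2) * hsum + (z - a) * (hqab - (a + b) * hsum) + ha

theorem cubic_eq_zero_iff_of_roots (hab : a ≠ b) (hac : a ≠ c) (hbc : b ≠ c)
    (ha : a ^ 3 - p * a ^ 2 + q * a - r = 0) (hb : b ^ 3 - p * b ^ 2 + q * b - r = 0)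
    (hc : c ^ 3 - p * c ^ 2 + q * c - r = 0) (z : R) :
    z ^ 3 - p * z ^ 2 + q * z - r = 0 ↔ z = a ∨ z = b ∨ z = c := by
  rw [cubic_eq_prod_sub_of_roots hab hac hbc ha hb hc z]
  simp only [mul_eq_zero, sub_eq_zero, or_assoc]

end CubicRoots

/-- the cubic `T³ − 29496 T² + 401808 T − 64` has three pairwise
distinct complex roots, all real and positive. -/
theorem freudenthal_cubic_roots :
    ∃ a b c : ℝ, 0 < a ∧ 0 < b ∧ 0 < c ∧ a ≠ b ∧ a ≠ c ∧ b ≠ c ∧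
      ∀ z : ℂ, z ^ 3 - 29496 * z ^ 2 + 401808 * z - 64 = 0 ↔
        z = (a : ℂ) ∨ z = (b : ℂ) ∨ z = (c : ℂ) := by
  let f : ℝ → ℝ := fun x => x ^ 3 - 29496 * x ^ 2 + 401808 * x - 64
  have hf : Continuous f := by fun_prop
  obtain ⟨a, ⟨ha0, ha1⟩, ha⟩ : ∃ a ∈ Ioo (0 : ℝ) 1, f a = 0 :=
    intermediate_value_Ioo zero_le_one hf.continuousOn ⟨by norm_num [f], by norm_num [f]⟩
  obtain ⟨b, ⟨hb1, hb20⟩, hb⟩ : ∃ b ∈ Ioo (1 : ℝ) 20, f b = 0 :=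
    intermediate_value_Ioo' (by norm_num) hf.continuousOn ⟨by norm_num [f], by norm_num [f]⟩
  obtain ⟨c, ⟨hc20, -⟩, hc⟩ : ∃ c ∈ Ioo (20 : ℝ) 30000, f c = 0 :=
    intermediate_value_Ioo (by norm_num) hf.continuousOn ⟨by norm_num [f], by norm_num [f]⟩
  have hab : a < b := ha1.trans hb1
  have hbc : b < c := hb20.trans hc20
  have hac : a < c := hab.trans hbc
  exact ⟨a, b, c, ha0, ha0.trans hab, ha0.trans hac, hab.ne, hac.ne, hbc.ne,
    cubic_eq_zero_iff_of_roots (by exact_mod_cast hab.ne) (by exact_mod_cast hac.ne)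
      (by exact_mod_cast hbc.ne) (by exact_mod_cast ha) (by exact_mod_cast hb)
      (by exact_mod_cast hc)⟩
end

section
/- Let Q(T) = 4237743313/721278 − (33629825/77976)·T + (84371/5770224)·T². For every z ∈ ℂ satisfying 64 − 401808·z^{18} + 29496·z^{36} − z^{54} = 0 (that is, P(z^{18}) = 0 where P(T) = 64 − 401808T + 29496T² − T³), one has 3456^{1/9} · conj(z) = z^{17} · Q(z^{18}), where conj denotes complex conjugation and 3456^{1/9} is the positive real ninth root of 3456. -/
/-!
A root `w` of `P` is real and positive. If `w = a + b i` with `b ≠ 0`, the imaginary part of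
`P w` forces `b ^ 2 = 3 a ^ 2 - 58992 a + 401808`; substituting into the real part gives a cubic
in `a` whose roots all make that quadratic negative.

For a root `a` of `P`, Euclidean division by `P` gives `a Q(a) ≡ r(a)`, `r(a) ^ 3 ≡ s(a)` and
`s(a) ^ 3 ≡ 3456 a` for explicit quadratics `r`, `s`, so `(a Q(a)) ^ 9 = 3456 a`.
If `z ^ 18 = a`, then `(3456 ^ (1/9) |z| ^ 2) ^ 9 = 3456 a` too, and injectivity of odd powers
gives `z ^ 18 Q(z ^ 18) = 3456 ^ (1/9) z̄ z`; cancelling `z` is the claim.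
-/

namespace Freudenthal

def P {K : Type*} [Ring K] (T : K) : K := 64 - 401808 * T + 29496 * T ^ 2 - T ^ 3

def Q {K : Type*} [DivisionRing K] (T : K) : K :=
  4237743313 / 721278 - 33629825 / 77976 * T + 84371 / 5770224 * T ^ 2

@[simp, norm_cast]
lemma ofReal_P (a : ℝ) : ((P a : ℝ) : ℂ) = P (a : ℂ) := by
  push_cast [P]; rfl

lemma mul_Q_pow_nine {K : Type*} [Field K] [CharZero K] {t : K} (ht : P t = 0) :
    (t * Q t) ^ 9 = 3456 * t := by
  unfold P at ht
  have hr : t * Q t = 337484 / 360639 + 3391 / 19494 * t - 17 / 2885112 * t ^ 2 := by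
    unfold Q; linear_combination (-84371 / 5770224 : K) * ht
  have hr3 : (t * Q t) ^ 3 = 32824 / 40071 + 2806 / 1083 * t - 7 / 80142 * t ^ 2 := by
    rw [hr]
    linear_combination
      ((337484 / 360639 + 3391 / 19494 * t - 17 / 2885112 * t ^ 2) *
        (266849 / 260120976642 - 289 / 8323871252544 * t) +
        (167669 / 38536440984 - 17 / 115609322952 * t)) * ht
  rw [show (t * Q t) ^ 9 = ((t * Q t) ^ 3) ^ 3 by ring, hr3]
  linear_combination
    (552579205816 / 64341405277911 + 12640744634 / 21447135092637 * t -
      1700545 / 42894270185274 * t ^ 2 + 343 / 514731242223288 * t ^ 3) * ht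

lemma pos_of_P_eq_zero {a : ℝ} (ha : P a = 0) : 0 < a := by
  unfold P at ha
  by_contra! h
  nlinarith [mul_nonneg (neg_nonneg.2 h) (sq_nonneg a)]

lemma quadratic_neg_of_cubic_eq_zero {a : ℝ}
    (h : 8 * a ^ 3 - 235968 * a ^ 2 + 1740831648 * a - 11851728704 = 0) :
    3 * a ^ 2 - 58992 * a + 401808 < 0 := by
  have hlow : 3407 / 500 < a := by
    by_contra! h'
    nlinarith [mul_nonneg (sub_nonneg.2 h') (sq_nonneg (a - 14745))]
  have hhigh : a < 14748 := by
    by_contra! h'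
    nlinarith [mul_nonneg (mul_nonneg (sub_nonneg.2 h') (sub_nonneg.2 h')) (sub_nonneg.2 h')]
  nlinarith [mul_pos (sub_pos.2 hlow) (sub_pos.2 hhigh)]

lemma im_eq_zero_of_P_eq_zero {w : ℂ} (hw : P w = 0) : w.im = 0 := by
  obtain ⟨a, b⟩ := w
  have hre := congrArg Complex.re hw
  have him := congrArg Complex.im hw
  simp only [P, pow_succ, pow_zero, one_mul, Complex.sub_re, Complex.add_re, Complex.mul_re,
    Complex.sub_im, Complex.add_im, Complex.mul_im, Complex.re_ofNat, Complex.im_ofNat,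
    Complex.zero_re, Complex.zero_im, zero_mul, sub_zero, add_zero, zero_sub] at hre him
  by_contra hb
  have hb2 : b ^ 2 = 3 * a ^ 2 - 58992 * a + 401808 :=
    mul_left_cancel₀ hb (by linear_combination him)
  have := quadratic_neg_of_cubic_eq_zero (by linear_combination hre + (29496 - 3 * a) * hb2)
  nlinarith [sq_nonneg b]

end Freudenthal

open Freudenthal

/-- for every `z ∈ ℂ` with `P(z^18) = 0`, where
`P(T) = 64 − 401808 T + 29496 T² − T³`, one has
`3456^{1/9} · conj(z) = z^17 · Q(z^18)`, with
`Q(T) = 4237743313/721278 − (33629825/77976) T + (84371/5770224) T²`. -/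
theorem freudenthal_conjugation (z : ℂ)
    (hz : 64 - 401808 * z ^ 18 + 29496 * z ^ 36 - z ^ 54 = 0) :
    (((3456 : ℝ) ^ ((1 : ℝ) / 9) : ℝ) : ℂ) * starRingEnd ℂ z =
      z ^ 17 * (4237743313 / 721278 - (33629825 / 77976) * z ^ 18 +
        (84371 / 5770224) * z ^ 36) := by
  have hP : P (z ^ 18) = 0 := by unfold P; linear_combination hz
  set a := (z ^ 18).re
  have ha : (a : ℂ) = z ^ 18 := Complex.ext rfl (im_eq_zero_of_P_eq_zero hP).symm
  have hPa : P a = 0 := by exact_mod_cast ha ▸ hP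
  have ha_pos : 0 < a := pos_of_P_eq_zero hPa
  have hnorm : (‖z‖ ^ 2) ^ 9 = a := by
    rw [← pow_mul, ← norm_pow, ← ha, Complex.norm_real, Real.norm_of_nonneg ha_pos.le]
  have hc : ((3456 : ℝ) ^ ((1 : ℝ) / 9)) ^ 9 = 3456 := by
    rw [one_div, show (9 : ℝ) = (9 : ℕ) by norm_num, Real.rpow_inv_natCast_pow] <;> norm_num
  set c : ℝ := (3456 : ℝ) ^ ((1 : ℝ) / 9)
  have hu : a * Q a = c * ‖z‖ ^ 2 :=
    (Odd.pow_inj (n := 9) (by decide)).mp (by rw [mul_Q_pow_nine hPa, mul_pow, hc, hnorm])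
  have hz0 : z ≠ 0 := by rintro rfl; simp [a] at ha_pos
  apply mul_right_cancel₀ hz0
  calc (c : ℂ) * starRingEnd ℂ z * z = ((c * ‖z‖ ^ 2 : ℝ) : ℂ) := by
        rw [mul_assoc, Complex.conj_mul']; push_cast; rfl
    _ = ((a * Q a : ℝ) : ℂ) := by rw [hu]
    _ = _ := by push_cast [Q]; rw [ha]; ring
end

section
/- The set of points (x, y) ∈ ℂ² satisfying the two equations y·(3y − 2x²) = 0 and 2y²x² − 2yx⁴ + x⁶ − 2y³ + x = 0 is exactly the union of the single point (0,0), the five points (s, 0) with s⁵ = −1, and the five points (s, (2/3)s²) with s⁵ = 27. -/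
/-!
The first equation splits the scheme along the two curves `y = 0` and `y = (2/3) x²`.
Restricted to them the second equation becomes `x (x⁵ + 1) = 0` and `x (27 - x⁵) / 27 = 0`
respectively.
-/

section

variable {K : Type*} [Field K]

def secondRelation (x y : K) : K :=
  2 * y ^ 2 * x ^ 2 - 2 * y * x ^ 4 + x ^ 6 - 2 * y ^ 3 + x

theorem mul_three_mul_sub_eq_zero_iff (h3 : (3 : K) ≠ 0) (x y : K) :
    y * (3 * y - 2 * x ^ 2) = 0 ↔ y = 0 ∨ y = 2 / 3 * x ^ 2 := by
  rw [mul_eq_zero, sub_eq_zero, div_mul_eq_mul_div, eq_div_iff h3, mul_comm y]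

theorem secondRelation_zero_eq_zero_iff (x : K) :
    secondRelation x 0 = 0 ↔ x = 0 ∨ x ^ 5 = -1 := by
  have h : secondRelation x 0 = x * (x ^ 5 + 1) := by unfold secondRelation; ring
  rw [h, mul_eq_zero, add_eq_zero_iff_eq_neg]

theorem secondRelation_two_thirds_eq_zero_iff (h3 : (3 : K) ≠ 0) (x : K) :
    secondRelation x (2 / 3 * x ^ 2) = 0 ↔ x = 0 ∨ x ^ 5 = 27 := by
  have h27 : (27 : K) ≠ 0 := by
    simpa [show (27 : K) = 3 ^ 3 by norm_num] using pow_ne_zero 3 h3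
  have h : 27 * secondRelation x (2 / 3 * x ^ 2) = x * (27 - x ^ 5) := by
    unfold secondRelation; field_simp; ring
  rw [← mul_eq_zero_iff_left h27, h, mul_eq_zero, sub_eq_zero, eq_comm (a := (27 : K))]

end

/-- the solution set in `ℂ²` of `y(3y − 2x²) = 0` and
`2y²x² − 2yx⁴ + x⁶ − 2y³ + x = 0` is the union of the point `(0,0)`, the five points
`(s, 0)` with `s⁵ = −1`, and the five points `(s, (2/3)s²)` with `s⁵ = 27`. -/
theorem symplectic_scheme_points :
    {p : ℂ × ℂ | p.2 * (3 * p.2 - 2 * p.1 ^ 2) = 0 ∧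
        2 * p.2 ^ 2 * p.1 ^ 2 - 2 * p.2 * p.1 ^ 4 + p.1 ^ 6 - 2 * p.2 ^ 3 + p.1 = 0} =
      {((0 : ℂ), (0 : ℂ))} ∪
        {p : ℂ × ℂ | p.1 ^ 5 = -1 ∧ p.2 = 0} ∪
        {p : ℂ × ℂ | p.1 ^ 5 = 27 ∧ p.2 = (2 / 3) * p.1 ^ 2} := by
  ext ⟨x, y⟩
  show (y * (3 * y - 2 * x ^ 2) = 0 ∧ secondRelation x y = 0) ↔
    ((x, y) = (0, 0) ∨ (x ^ 5 = -1 ∧ y = 0)) ∨ (x ^ 5 = 27 ∧ y = 2 / 3 * x ^ 2)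
  have h3 : (3 : ℂ) ≠ 0 := three_ne_zero
  rw [mul_three_mul_sub_eq_zero_iff h3, Prod.mk.injEq]
  constructor
  · rintro ⟨rfl | rfl, h⟩
    · rcases (secondRelation_zero_eq_zero_iff x).1 h with rfl | h5
      · exact Or.inl (Or.inl ⟨rfl, rfl⟩)
      · exact Or.inl (Or.inr ⟨h5, rfl⟩)
    · rcases (secondRelation_two_thirds_eq_zero_iff h3 x).1 h with rfl | h5
      · exact Or.inl (Or.inl ⟨rfl, by ring⟩)
      · exact Or.inr ⟨h5, rfl⟩
  · rintro ((⟨rfl, rfl⟩ | ⟨h5, rfl⟩) | ⟨h5, rfl⟩)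
    · exact ⟨Or.inl rfl, (secondRelation_zero_eq_zero_iff 0).2 (Or.inl rfl)⟩
    · exact ⟨Or.inl rfl, (secondRelation_zero_eq_zero_iff x).2 (Or.inr h5)⟩
    · exact ⟨Or.inr rfl, (secondRelation_two_thirds_eq_zero_iff h3 x).2 (Or.inr h5)⟩
end

section
/- Let I be the ideal of the polynomial ring ℂ[x, y] generated by y·(3y − 2x²) and 2y²x² − 2yx⁴ + x⁶ − 2y³ + x. Then the quotient ring ℂ[x, y]/I is a ℂ-vector space of dimension 12, and it is not reduced, i.e. it contains a nonzero nilpotent element. -/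
/-!
Write `x = σ₁`, `y = σ₂` and `A` for the quotient, over any field `K` of characteristic zero.
Modulo `f₁ = y(3y - 2x²)`, nine times the second generator `f₂` reduces to `9(x + x⁶) - 14x⁴y`,
and from there one gets in `A` the relations
`x¹¹ = 26x⁶ + 27x`, `42xy = x³ + x⁸`, `63y² = x⁴ + x⁹`, so `1, x, …, x¹⁰, y` span `A`.
Geometrically, `f₁ = 0` splits into the line `y = 0`, on which `f₂ = x(x⁵ + 1)`, and the
parabola `3y = 2x²`, on which `f₂ = x(27 - x⁵)/27`; at the origin the local ring is `K[ε]/ε²`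
with `x ↦ 0, y ↦ ε`. The resulting map `A → K[ε]/ε² × K[u]/(u⁵ + 1) × K[w]/(w⁵ - 3)` is onto
because `x⁵` separates the three factors, so `dim A ≥ 12`. Finally `y(x⁵ - 27)` squares to zero
in `A` but survives at the double point.
-/

open MvPolynomial

theorem Submodule.mem_of_ofNat_mul_mem {K A : Type*} [Field K] [CharZero K] [Ring A]
    [Algebra K A] {V : Submodule K A} (n : ℕ) [n.AtLeastTwo] {z : A}
    (h : (OfNat.ofNat n : A) * z ∈ V) : z ∈ V := by
  rw [← map_ofNat (algebraMap K A), ← Algebra.smul_def] at h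
  exact (V.smul_mem_iff (NeZero.ne (OfNat.ofNat n))).1 h

theorem AlgHom.prod_surjective {R A B C : Type*} [CommSemiring R] [Ring A] [Ring B] [Ring C]
    [Algebra R A] [Algebra R B] [Algebra R C] {f : A →ₐ[R] B} {g : A →ₐ[R] C}
    (hf : Function.Surjective f) (hg : Function.Surjective g) (he : ∃ e, f e = 1 ∧ g e = 0) :
    Function.Surjective (f.prod g) := by
  rintro ⟨b, c⟩
  obtain ⟨a, rfl⟩ := hf b
  obtain ⟨a', rfl⟩ := hg c
  obtain ⟨e, he₁, he₀⟩ := he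
  exact ⟨e * a + (1 - e) * a', by simp [he₁, he₀]⟩

theorem AdjoinRoot.surjective_of_root_mem_range {R A : Type*} [CommRing R] [Ring A]
    [Algebra R A] {p : Polynomial R} {f : A →ₐ[R] AdjoinRoot p}
    (h : AdjoinRoot.root p ∈ f.range) : Function.Surjective f :=
  (AlgHom.range_eq_top f).1 <| top_le_iff.1 <|
    AdjoinRoot.adjoinRoot_eq_top (f := p) ▸ Algebra.adjoin_le (Set.singleton_subset_iff.2 h)

namespace SymplecticQH

def rel₁ {S : Type*} [CommRing S] (x y : S) : S := y * (3 * y - 2 * x ^ 2)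

def rel₂ {S : Type*} [CommRing S] (x y : S) : S :=
  2 * y ^ 2 * x ^ 2 - 2 * y * x ^ 4 + x ^ 6 - 2 * y ^ 3 + x

section Relations

variable {S : Type*} [CommRing S] {x y : S}

theorem map_rel₁ {T F : Type*} [CommRing T] [FunLike F S T] [RingHomClass F S T] (f : F)
    (x y : S) : f (rel₁ x y) = rel₁ (f x) (f y) := by
  simp only [rel₁, map_mul, map_sub, map_pow, map_ofNat]

theorem map_rel₂ {T F : Type*} [CommRing T] [FunLike F S T] [RingHomClass F S T] (f : F)
    (x y : S) : f (rel₂ x y) = rel₂ (f x) (f y) := by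
  simp only [rel₂, map_add, map_mul, map_sub, map_pow, map_ofNat]

theorem fourteen_mul_pow_four_mul_eq (h₁ : rel₁ x y = 0) (h₂ : rel₂ x y = 0) :
    14 * x ^ 4 * y = 9 * (x + x ^ 6) := by
  unfold rel₁ rel₂ at *
  linear_combination (2 * x ^ 2 - 6 * y) * h₁ - 9 * h₂

theorem mul_mul_pow_five_sub_eq_zero (h₁ : rel₁ x y = 0) (h₂ : rel₂ x y = 0) :
    x * y * (x ^ 5 - 27) = 0 := by
  have h := fourteen_mul_pow_four_mul_eq h₁ h₂
  unfold rel₁ at h₁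
  linear_combination 3 * y * h - 14 * x ^ 4 * h₁

theorem pow_eleven_eq (h₁ : rel₁ x y = 0) (h₂ : rel₂ x y = 0) (h₃ : IsUnit (3 : S)) :
    x ^ 11 = 26 * x ^ 6 + 27 * x := by
  have h := fourteen_mul_pow_four_mul_eq h₁ h₂
  have h' := mul_mul_pow_five_sub_eq_zero h₁ h₂
  refine (h₃.pow 2).mul_left_cancel ?_
  linear_combination (27 - x ^ 5) * h + 14 * x ^ 3 * h'

theorem forty_two_mul_mul_eq (h₁ : rel₁ x y = 0) (h₂ : rel₂ x y = 0) (h₃ : IsUnit (3 : S)) :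
    42 * (x * y) = x ^ 3 + x ^ 8 := by
  have h := fourteen_mul_pow_four_mul_eq h₁ h₂
  have h' := mul_mul_pow_five_sub_eq_zero h₁ h₂
  refine (h₃.pow 2).mul_left_cancel ?_
  linear_combination x ^ 2 * h - 14 * h'

theorem sixty_three_mul_sq_eq (h₁ : rel₁ x y = 0) (h₂ : rel₂ x y = 0) (h₃ : IsUnit (3 : S)) :
    63 * y ^ 2 = x ^ 4 + x ^ 9 := by
  have h := forty_two_mul_mul_eq h₁ h₂ h₃
  unfold rel₁ at h₁
  linear_combination 21 * h₁ + x * h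

theorem mul_pow_five_sub_sq_eq_zero (h₁ : rel₁ x y = 0) (h₂ : rel₂ x y = 0)
    (h₃ : IsUnit (3 : S)) : (y * (x ^ 5 - 27)) ^ 2 = 0 := by
  have h' := mul_mul_pow_five_sub_eq_zero h₁ h₂
  unfold rel₁ at h₁
  refine h₃.mul_left_cancel ?_
  linear_combination (x ^ 5 - 27) ^ 2 * h₁ + 2 * x * (x ^ 5 - 27) * h'

end Relations

noncomputable section Quotient

variable (K : Type*) [Field K]

def relIdeal : Ideal (MvPolynomial (Fin 2) K) :=
  Ideal.span {rel₁ (X 0) (X 1), rel₂ (X 0) (X 1)}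

abbrev QH : Type _ := MvPolynomial (Fin 2) K ⧸ relIdeal K

def σ₁ : QH K := Ideal.Quotient.mk _ (X 0)

def σ₂ : QH K := Ideal.Quotient.mk _ (X 1)

theorem rel₁_σ : rel₁ (σ₁ K) (σ₂ K) = 0 := by
  rw [σ₁, σ₂, ← map_rel₁, Ideal.Quotient.eq_zero_iff_mem]
  exact Ideal.subset_span (by simp)

theorem rel₂_σ : rel₂ (σ₁ K) (σ₂ K) = 0 := by
  rw [σ₁, σ₂, ← map_rel₂, Ideal.Quotient.eq_zero_iff_mem]
  exact Ideal.subset_span (by simp)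

theorem isUnit_three [CharZero K] : IsUnit (3 : QH K) := by
  have h := (IsUnit.mk0 (3 : K) three_ne_zero).map (algebraMap K (QH K))
  rwa [map_ofNat] at h

variable {K} {B : Type*} [CommRing B] [Algebra K B]

def lift (x y : B) (h₁ : rel₁ x y = 0) (h₂ : rel₂ x y = 0) : QH K →ₐ[K] B :=
  have hle : relIdeal K ≤ RingHom.ker (aeval ![x, y]) := Ideal.span_le.2 <| by
    rintro _ (rfl | rfl) <;> simp [map_rel₁, map_rel₂, h₁, h₂]
  Ideal.Quotient.liftₐ _ (aeval ![x, y]) fun _ hp ↦ RingHom.mem_ker.1 (hle hp)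

theorem lift_mk (x y : B) (h₁ : rel₁ x y = 0) (h₂ : rel₂ x y = 0)
    (p : MvPolynomial (Fin 2) K) : lift x y h₁ h₂ (Ideal.Quotient.mk _ p) = aeval ![x, y] p :=
  rfl

@[simp] theorem lift_σ₁ (x y : B) (h₁ : rel₁ x y = 0) (h₂ : rel₂ x y = 0) :
    lift x y h₁ h₂ (σ₁ K) = x := by
  simp [σ₁, lift_mk]

@[simp] theorem lift_σ₂ (x y : B) (h₁ : rel₁ x y = 0) (h₂ : rel₂ x y = 0) :
    lift x y h₁ h₂ (σ₂ K) = y := by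
  simp [σ₂, lift_mk]

end Quotient

noncomputable section UpperBound

open Submodule Set

variable (K : Type*) [Field K] [CharZero K]

def spanningFamily : Option (Fin 11) → QH K := fun i ↦ i.elim (σ₂ K) fun j ↦ σ₁ K ^ (j : ℕ)

theorem σ₁_pow_mem_span (n : ℕ) : σ₁ K ^ n ∈ span K (range (spanningFamily K)) := by
  induction n using Nat.strong_induction_on with
  | _ n ih =>
    obtain hn | hn := lt_or_ge n 11
    · exact subset_span ⟨some ⟨n, hn⟩, rfl⟩
    obtain ⟨m, rfl⟩ := Nat.exists_eq_add_of_le' hn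
    have h := pow_eleven_eq (rel₁_σ K) (rel₂_σ K) (isUnit_three K)
    have : σ₁ K ^ (m + 11) = 26 • σ₁ K ^ (m + 6) + 27 • σ₁ K ^ (m + 1) := by
      linear_combination σ₁ K ^ m * h
    rw [this]
    exact add_mem (nsmul_mem (ih _ (by omega)) _) (nsmul_mem (ih _ (by omega)) _)

theorem mul_σ₁_mem_span {v : QH K} (hv : v ∈ span K (range (spanningFamily K))) :
    v * σ₁ K ∈ span K (range (spanningFamily K)) := by
  refine span_le (p := (span K (range (spanningFamily K))).comap (LinearMap.mulRight K (σ₁ K)))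
    |>.2 ?_ hv
  rintro _ ⟨i | j, rfl⟩ <;>
    simp only [SetLike.mem_coe, mem_comap, LinearMap.mulRight_apply, spanningFamily, Option.elim]
  · refine mem_of_ofNat_mul_mem (K := K) 42 ?_
    rw [mul_comm (σ₂ K), forty_two_mul_mul_eq (rel₁_σ K) (rel₂_σ K) (isUnit_three K)]
    exact add_mem (σ₁_pow_mem_span K 3) (σ₁_pow_mem_span K 8)
  · simpa [← pow_succ] using σ₁_pow_mem_span K (j + 1)

theorem σ₁_pow_mul_σ₂_mem_span (n : ℕ) :
    σ₁ K ^ n * σ₂ K ∈ span K (range (spanningFamily K)) := by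
  induction n with
  | zero => simpa using (subset_span ⟨none, rfl⟩ : σ₂ K ∈ span K (range (spanningFamily K)))
  | succ n ih => simpa [pow_succ, mul_right_comm] using mul_σ₁_mem_span K ih

theorem mul_σ₂_mem_span {v : QH K} (hv : v ∈ span K (range (spanningFamily K))) :
    v * σ₂ K ∈ span K (range (spanningFamily K)) := by
  refine span_le (p := (span K (range (spanningFamily K))).comap (LinearMap.mulRight K (σ₂ K)))
    |>.2 ?_ hv
  rintro _ ⟨i | j, rfl⟩ <;>
    simp only [SetLike.mem_coe, mem_comap, LinearMap.mulRight_apply, spanningFamily, Option.elim]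
  · refine mem_of_ofNat_mul_mem (K := K) 63 ?_
    rw [← sq, sixty_three_mul_sq_eq (rel₁_σ K) (rel₂_σ K) (isUnit_three K)]
    exact add_mem (σ₁_pow_mem_span K 4) (σ₁_pow_mem_span K 9)
  · exact σ₁_pow_mul_σ₂_mem_span K j

theorem span_spanningFamily : span K (range (spanningFamily K)) = ⊤ := by
  refine eq_top_iff'.2 fun a ↦ ?_
  obtain ⟨p, rfl⟩ := Ideal.Quotient.mk_surjective a
  induction p using MvPolynomial.induction_on with
  | C c =>
    rw [← MvPolynomial.algebraMap_eq, Ideal.Quotient.mk_algebraMap,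
      Algebra.algebraMap_eq_smul_one]
    exact smul_mem _ c (by simpa using σ₁_pow_mem_span K 0)
  | add p q hp hq => simpa using add_mem hp hq
  | mul_X p i hp =>
    rw [map_mul]
    fin_cases i
    · exact mul_σ₁_mem_span K hp
    · exact mul_σ₂_mem_span K hp

instance : FiniteDimensional K (QH K) :=
  Module.finite_def.2 (span_spanningFamily K ▸ fg_span (finite_range _))

theorem finrank_le_twelve : Module.finrank K (QH K) ≤ 12 := by
  rw [← finrank_top, ← span_spanningFamily]
  exact (finrank_range_le_card _).trans (by simp)

end UpperBound

noncomputable section Points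

open AdjoinRoot

variable (K : Type*) [Field K]

abbrev AdjoinNthRoot (n : ℕ) (a : K) : Type _ := AdjoinRoot (Polynomial.X ^ n - Polynomial.C a)

instance (n : ℕ) [NeZero n] (a : K) : Module.Finite K (AdjoinNthRoot K n a) :=
  (Polynomial.monic_X_pow_sub_C a (NeZero.ne n)).finite_adjoinRoot

theorem finrank_adjoinNthRoot (n : ℕ) (a : K) : Module.finrank K (AdjoinNthRoot K n a) = n :=
  finrank_quotient_span_eq_natDegree.trans Polynomial.natDegree_X_pow_sub_C

theorem root_pow_five_of_neg_one : root (Polynomial.X ^ 5 - Polynomial.C (-1 : K)) ^ 5 = -1 := by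
  simpa using root_X_pow_sub_C_pow 5 (-1 : K)

theorem root_pow_five_of_three : root (Polynomial.X ^ 5 - Polynomial.C (3 : K)) ^ 5 = 3 := by
  rw [root_X_pow_sub_C_pow]
  exact map_ofNat _ 3

def toOrigin : QH K →ₐ[K] AdjoinNthRoot K 2 0 :=
  have hε : root (Polynomial.X ^ 2 - Polynomial.C (0 : K)) ^ 2 = 0 := by
    simpa using root_X_pow_sub_C_pow 2 (0 : K)
  lift 0 (root _) (by unfold rel₁; linear_combination 3 * hε)
    (by unfold rel₂; linear_combination -2 * root _ * hε)

def toLine : QH K →ₐ[K] AdjoinNthRoot K 5 (-1) :=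
  lift (root _) 0 (by unfold rel₁; ring)
    (by unfold rel₂; linear_combination root _ * root_pow_five_of_neg_one K)

/-- The parabola `3y = 2x²` meets `x⁵ = 27` in the points `(w³, 2w)` with `w⁵ = 3`. -/
def toParabola : QH K →ₐ[K] AdjoinNthRoot K 5 3 :=
  lift (root _ ^ 3) (2 * root _)
    (by unfold rel₁; linear_combination -4 * root _ ^ 2 * root_pow_five_of_three K)
    (by
      unfold rel₂
      linear_combination root _ ^ 3 * (root _ ^ 10 - root _ ^ 5 + 5) * root_pow_five_of_three K)

def toPoints : QH K →ₐ[K] AdjoinNthRoot K 2 0 × AdjoinNthRoot K 5 (-1) × AdjoinNthRoot K 5 3 :=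
  (toOrigin K).prod ((toLine K).prod (toParabola K))

theorem toPoints_surjective [CharZero K] : Function.Surjective (toPoints K) := by
  have hu := root_pow_five_of_neg_one K
  have hw := root_pow_five_of_three K
  -- `σ₁⁵` takes the values `0`, `-1`, `27` on the three factors.
  refine AlgHom.prod_surjective (surjective_of_root_mem_range ⟨σ₂ K, by simp [toOrigin]⟩)
    (AlgHom.prod_surjective (surjective_of_root_mem_range ⟨σ₁ K, by simp [toLine]⟩)
      (surjective_of_root_mem_range ⟨(2 : K)⁻¹ • σ₂ K, ?_⟩)
      ⟨(-28 : K)⁻¹ • (σ₁ K ^ 5 - 27), ?_, ?_⟩)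
    ⟨(-27 : K)⁻¹ • ((σ₁ K ^ 5 + 1) * (σ₁ K ^ 5 - 27)), ?_, ?_⟩
  · change toParabola K _ = _
    rw [map_smul, inv_smul_eq_iff₀ two_ne_zero, two_smul]
    simp [toParabola, two_mul]
  · rw [map_smul, inv_smul_eq_iff₀ (by norm_num)]
    simp [toLine, hu, Algebra.smul_def, map_ofNat]
    norm_num
  · simp [toParabola, map_ofNat]
    linear_combination (root _ ^ 10 + 3 * root _ ^ 5 + 9) * hw
  · rw [map_smul, inv_smul_eq_iff₀ (by norm_num)]
    simp [toOrigin, Algebra.smul_def, map_ofNat]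
  · ext <;> simp [toLine, toParabola, hu, map_ofNat]
    linear_combination (root _ ^ 15 + 1) * (root _ ^ 10 + 3 * root _ ^ 5 + 9) * hw

theorem finrank_eq_twelve [CharZero K] : Module.finrank K (QH K) = 12 := by
  refine le_antisymm (finrank_le_twelve K) ?_
  have := LinearMap.finrank_le_finrank_of_surjective (f := (toPoints K).toLinearMap)
    (toPoints_surjective K)
  simpa [Module.finrank_prod, finrank_adjoinNthRoot] using this

theorem not_isReduced [CharZero K] : ¬ IsReduced (QH K) := by
  have h₀ : toOrigin K (σ₂ K * (σ₁ K ^ 5 - 27)) ≠ 0 := by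
    simp only [toOrigin, map_mul, map_sub, map_pow, map_ofNat, lift_σ₁, lift_σ₂]
    rw [zero_pow (by norm_num), zero_sub, mul_neg, neg_ne_zero, mul_comm,
      ← map_ofNat (algebraMap K (AdjoinNthRoot K 2 0)) 27, ← Algebra.smul_def]
    exact smul_ne_zero (by norm_num) (root_X_pow_sub_C_ne_zero one_lt_two 0)
  intro _
  have hsq := mul_pow_five_sub_sq_eq_zero (rel₁_σ K) (rel₂_σ K) (isUnit_three K)
  exact h₀ (by rw [IsNilpotent.eq_zero ⟨2, hsq⟩, map_zero])

end Points

end SymplecticQH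

/-- the quotient of `ℂ[x,y]` by the ideal generated by `y(3y − 2x²)` and
`2y²x² − 2yx⁴ + x⁶ − 2y³ + x` is a complex vector space of dimension 12, and it is not
reduced. Here `x = X 0` and `y = X 1`. -/
theorem symplectic_scheme_not_reduced
    (I : Ideal (MvPolynomial (Fin 2) ℂ))
    (hI : I = Ideal.span
      {X 1 * (3 * X 1 - 2 * X 0 ^ 2),
        2 * X 1 ^ 2 * X 0 ^ 2 - 2 * X 1 * X 0 ^ 4 + X 0 ^ 6 - 2 * X 1 ^ 3 + X 0}) :
    Module.finrank ℂ (MvPolynomial (Fin 2) ℂ ⧸ I) = 12 ∧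
      ¬ IsReduced (MvPolynomial (Fin 2) ℂ ⧸ I) := by
  subst hI
  exact ⟨SymplecticQH.finrank_eq_twelve ℂ, SymplecticQH.not_isReduced ℂ⟩
end
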